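/- arXiv:1305.1172 — 5 statements merged into one kernel-verified Lean document; each statement's English description precedes it below -/
import Mathlib

section
/- Let (X,d_X) be a compact metric space. Then (X,d_X) is a path metric space (the distance between any two points equals the infimum of lengths of continuous curves joining them) if and only if for every x, y ∈ X and every ε > 0 there exists z ∈ X such that max(d_X(x,z), d_X(y,z)) ≤ (1/2) d_X(x,y) + ε. -/
open Set Metric

/-- A metric space is a path metric space (length space) if the distance between any two
points is the infimum of the lengths of continuous curves joining them, the length of a
curve being its total variation. -/
def IsPathMetricSpace (X : Type*) [MetricSpace X] : Prop :=
  ∀ x y : X, edist x y = ⨅ γ : Path x y, eVariationOn γ Set.univ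

/-!
Along a curve from `x` to `y` of length less than `d(x,y) + ε`, the point equidistant from the
two ends (it exists by the intermediate value theorem) is an approximate midpoint.

Conversely, by compactness a minimiser of `max (d(x,·)) (d(y,·))` is an exact midpoint.
Inserting midpoints repeatedly places points at the dyadic times `k / 2 ^ n`, consecutive ones at
distance at most `d(x,y) / 2 ^ n`. Reading them off at the times `⌊t 2 ^ n⌋ / 2 ^ n` gives, by
completeness, a limit curve which is `d(x,y)`-Lipschitz, hence of length at most `d(x,y)`.
-/

open Filter Topology unitInterval NNReal

section

variable {X : Type*}

namespace Path

variable [MetricSpace X] {x y : X}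

theorem edist_le_eVariationOn (γ : Path x y) : edist x y ≤ eVariationOn γ univ := by
  simpa using eVariationOn.edist_le γ (mem_univ 0) (mem_univ 1)

theorem edist_add_edist_le_eVariationOn (γ : Path x y) (t : I) :
    edist x (γ t) + edist (γ t) y ≤ eVariationOn γ univ := by
  have h0 : (0 : I) ≤ t := t.2.1
  have h1 : t ≤ 1 := t.2.2
  have e0 := eVariationOn.edist_le γ (s := univ ∩ Icc 0 t) ⟨mem_univ _, left_mem_Icc.2 h0⟩
    ⟨mem_univ _, right_mem_Icc.2 h0⟩
  have e1 := eVariationOn.edist_le γ (s := univ ∩ Icc t 1) ⟨mem_univ _, left_mem_Icc.2 h1⟩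
    ⟨mem_univ _, right_mem_Icc.2 h1⟩
  rw [γ.source] at e0
  rw [γ.target] at e1
  calc edist x (γ t) + edist (γ t) y
      ≤ eVariationOn γ (univ ∩ Icc 0 t) + eVariationOn γ (univ ∩ Icc t 1) :=
        add_le_add e0 e1
    _ = eVariationOn γ (univ ∩ Icc 0 1) := eVariationOn.Icc_add_Icc γ h0 h1 (mem_univ t)
    _ ≤ eVariationOn γ univ := eVariationOn.mono γ inter_subset_left

theorem exists_dist_eq (γ : Path x y) : ∃ t, dist x (γ t) = dist y (γ t) := by
  have hf : Continuous fun t => dist x (γ t) - dist y (γ t) := by fun_prop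
  have hsign :
      (0 : ℝ) ∈ Icc (dist x (γ 0) - dist y (γ 0)) (dist x (γ 1) - dist y (γ 1)) := by
    simp [dist_comm]
  obtain ⟨t, ht⟩ := intermediate_value_univ 0 1 hf hsign
  exact ⟨t, sub_eq_zero.1 ht⟩

end Path

theorem IsPathMetricSpace.exists_approx_midpoint [MetricSpace X] (h : IsPathMetricSpace X)
    (x y : X) {ε : ℝ} (hε : 0 < ε) :
    ∃ z, max (dist x z) (dist y z) ≤ dist x y / 2 + ε := by
  have hinf : ⨅ γ : Path x y, eVariationOn γ univ < edist x y + ENNReal.ofReal ε := by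
    rw [← h x y]
    exact ENNReal.lt_add_right (edist_ne_top x y) (ENNReal.ofReal_pos.2 hε).ne'
  obtain ⟨γ, hγ⟩ := iInf_lt_iff.1 hinf
  obtain ⟨t, ht⟩ := γ.exists_dist_eq
  have hlen := (γ.edist_add_edist_le_eVariationOn t).trans_lt hγ
  rw [edist_dist, edist_dist, edist_dist, ← ENNReal.ofReal_add dist_nonneg dist_nonneg,
    ← ENNReal.ofReal_add dist_nonneg hε.le, ENNReal.ofReal_lt_ofReal_iff (by positivity),
    dist_comm (γ t), ← ht] at hlen
  refine ⟨γ t, ?_⟩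
  rw [← ht, max_self]
  linarith

def IsMidpointMap [MetricSpace X] (m : X → X → X) : Prop :=
  ∀ a b, max (dist a (m a b)) (dist b (m a b)) ≤ dist a b / 2

theorem exists_isMidpointMap_of_approx [MetricSpace X] [CompactSpace X]
    (H : ∀ x y : X, ∀ ε > (0 : ℝ), ∃ z, max (dist x z) (dist y z) ≤ dist x y / 2 + ε) :
    ∃ m : X → X → X, IsMidpointMap m := by
  suffices hmid : ∀ x y : X, ∃ z, max (dist x z) (dist y z) ≤ dist x y / 2 by
    choose m hm using hmid
    exact ⟨m, hm⟩
  intro x y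
  have hf : Continuous fun z => max (dist x z) (dist y z) := by fun_prop
  obtain ⟨z, -, hz⟩ := isCompact_univ.exists_isMinOn ⟨x, mem_univ x⟩ hf.continuousOn
  refine ⟨z, le_of_forall_pos_le_add fun ε hε => ?_⟩
  obtain ⟨w, hw⟩ := H x y ε hε
  exact (hz (mem_univ w)).trans hw

section DyadicMidpoint

variable (m : X → X → X) (x y : X)

/-- The point placed at time `k / 2 ^ n` by inserting midpoints `m` level by level. -/
noncomputable def dyadicMidpoint : ℕ → ℕ → X
  | 0, k => if k = 0 then x else y
  | n + 1, k =>
      if k % 2 = 0 then dyadicMidpoint n (k / 2)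
      else m (dyadicMidpoint n (k / 2)) (dyadicMidpoint n (k / 2 + 1))

theorem dyadicMidpoint_succ_two_mul (n k : ℕ) :
    dyadicMidpoint m x y (n + 1) (2 * k) = dyadicMidpoint m x y n k := by
  simp [dyadicMidpoint]

theorem dyadicMidpoint_succ_two_mul_add_one (n k : ℕ) :
    dyadicMidpoint m x y (n + 1) (2 * k + 1) =
      m (dyadicMidpoint m x y n k) (dyadicMidpoint m x y n (k + 1)) := by
  simp [dyadicMidpoint, Nat.add_mod, Nat.add_div]

theorem dyadicMidpoint_zero (n : ℕ) : dyadicMidpoint m x y n 0 = x := by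
  induction n with
  | zero => simp [dyadicMidpoint]
  | succ n ih => simpa [ih] using dyadicMidpoint_succ_two_mul m x y n 0

theorem dyadicMidpoint_two_pow (n : ℕ) : dyadicMidpoint m x y n (2 ^ n) = y := by
  induction n with
  | zero => simp [dyadicMidpoint]
  | succ n ih => rw [pow_succ', dyadicMidpoint_succ_two_mul, ih]

end DyadicMidpoint

section DyadicLimit

variable [MetricSpace X] {m : X → X → X} {x y : X}

theorem dist_dyadicMidpoint_succ_le (hm : IsMidpointMap m) (n k : ℕ) :
    dist (dyadicMidpoint m x y n k) (dyadicMidpoint m x y n (k + 1)) ≤ dist x y / 2 ^ n := by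
  induction n generalizing k with
  | zero => by_cases hk : k = 0 <;> simp [dyadicMidpoint, hk]
  | succ n ih =>
    set F := dyadicMidpoint m x y n
    have hmid (j : ℕ) : max (dist (F j) (m (F j) (F (j + 1))))
        (dist (F (j + 1)) (m (F j) (F (j + 1)))) ≤ dist x y / 2 ^ (n + 1) :=
      (hm _ _).trans (by rw [pow_succ, ← div_div]; linarith [ih j])
    obtain ⟨j, rfl | rfl⟩ := Nat.even_or_odd' k
    · rw [dyadicMidpoint_succ_two_mul, dyadicMidpoint_succ_two_mul_add_one]
      exact (le_max_left _ _).trans (hmid j)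
    · rw [dyadicMidpoint_succ_two_mul_add_one, show 2 * j + 1 + 1 = 2 * (j + 1) by ring,
        dyadicMidpoint_succ_two_mul, dist_comm]
      exact (le_max_right _ _).trans (hmid j)

theorem dist_dyadicMidpoint_le (hm : IsMidpointMap m) (n : ℕ) {j k : ℕ} (hjk : j ≤ k) :
    dist (dyadicMidpoint m x y n j) (dyadicMidpoint m x y n k) ≤
      (k - j : ℕ) * (dist x y / 2 ^ n) := by
  simpa using dist_le_Ico_sum_of_dist_le (f := dyadicMidpoint m x y n)
    (d := fun _ => dist x y / 2 ^ n) hjk fun _ _ => dist_dyadicMidpoint_succ_le hm n _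

theorem dist_dyadicMidpoint_div_two_le (hm : IsMidpointMap m) (n k : ℕ) :
    dist (dyadicMidpoint m x y n (k / 2)) (dyadicMidpoint m x y (n + 1) k) ≤
      dist x y / 2 ^ (n + 1) := by
  obtain ⟨j, rfl | rfl⟩ := Nat.even_or_odd' k
  · rw [dyadicMidpoint_succ_two_mul, Nat.mul_div_cancel_left j two_pos, dist_self]
    positivity
  · rw [dyadicMidpoint_succ_two_mul_add_one, show (2 * j + 1) / 2 = j by omega, pow_succ,
      ← div_div]
    calc _ ≤ _ := le_max_left _ _
      _ ≤ _ := hm _ _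
      _ ≤ _ := by gcongr; exact dist_dyadicMidpoint_succ_le hm n j

variable (m x y) in
noncomputable def dyadicApprox (n : ℕ) (t : ℝ) : X := dyadicMidpoint m x y n ⌊t * 2 ^ n⌋₊

theorem dist_dyadicApprox_succ_le (hm : IsMidpointMap m) (n : ℕ) (t : ℝ) :
    dist (dyadicApprox m x y n t) (dyadicApprox m x y (n + 1) t) ≤ dist x y / 2 / 2 ^ n := by
  have hfloor : ⌊t * 2 ^ (n + 1)⌋₊ / 2 = ⌊t * 2 ^ n⌋₊ := by
    rw [← Nat.floor_div_ofNat, pow_succ, ← mul_assoc, mul_div_cancel_right₀ _ two_ne_zero]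
  rw [div_div, ← pow_succ', dyadicApprox, dyadicApprox, ← hfloor]
  exact dist_dyadicMidpoint_div_two_le hm n _

theorem dist_dyadicApprox_le (hm : IsMidpointMap m) (n : ℕ) {s t : ℝ} (hs : 0 ≤ s)
    (hst : s ≤ t) : dist (dyadicApprox m x y n s) (dyadicApprox m x y n t) ≤
      dist x y * (t - s) + dist x y / 2 ^ n := by
  have hjk : ⌊s * 2 ^ n⌋₊ ≤ ⌊t * 2 ^ n⌋₊ := Nat.floor_mono (by gcongr)
  have hcount :
      ((⌊t * 2 ^ n⌋₊ - ⌊s * 2 ^ n⌋₊ : ℕ) : ℝ) ≤ (t - s) * 2 ^ n + 1 := by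
    rw [Nat.cast_sub hjk]
    linarith [Nat.floor_le (mul_nonneg (hs.trans hst) (by positivity : (0 : ℝ) ≤ 2 ^ n)),
      Nat.lt_floor_add_one (s * 2 ^ n)]
  calc _ ≤ _ := dist_dyadicMidpoint_le hm n hjk
    _ ≤ ((t - s) * 2 ^ n + 1) * (dist x y / 2 ^ n) := by gcongr
    _ = _ := by field_simp

variable (m x y) in
noncomputable def dyadicLimit (t : ℝ) : X :=
  haveI : Nonempty X := ⟨x⟩
  limUnder atTop fun n => dyadicApprox m x y n t

theorem tendsto_dyadicApprox [CompleteSpace X] (hm : IsMidpointMap m) (t : ℝ) :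
    Tendsto (fun n => dyadicApprox m x y n t) atTop (𝓝 (dyadicLimit m x y t)) :=
  haveI : Nonempty X := ⟨x⟩
  (cauchySeq_of_le_geometric_two fun n => dist_dyadicApprox_succ_le hm n t).tendsto_limUnder

theorem dyadicLimit_zero : dyadicLimit m x y 0 = x := by
  simpa [dyadicLimit, dyadicApprox, dyadicMidpoint_zero] using
    tendsto_const_nhds.limUnder_eq (f := atTop (α := ℕ)) (x := x)

theorem dyadicLimit_one : dyadicLimit m x y 1 = y := by
  have hfloor (n : ℕ) : ⌊(2 : ℝ) ^ n⌋₊ = 2 ^ n := by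
    exact_mod_cast Nat.floor_natCast (2 ^ n)
  simpa [dyadicLimit, dyadicApprox, hfloor, dyadicMidpoint_two_pow] using
    tendsto_const_nhds.limUnder_eq (f := atTop (α := ℕ)) (x := y)

theorem dist_dyadicLimit_le [CompleteSpace X] (hm : IsMidpointMap m) {s t : ℝ}
    (hs : 0 ≤ s) (hst : s ≤ t) :
    dist (dyadicLimit m x y s) (dyadicLimit m x y t) ≤ dist x y * (t - s) := by
  have hbound : Tendsto (fun n : ℕ => dist x y * (t - s) + dist x y / 2 ^ n) atTop
      (𝓝 (dist x y * (t - s))) := by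
    simpa using (tendsto_const_nhds (x := dist x y * (t - s))).add
      ((tendsto_const_nhds (x := dist x y)).div_atTop
        (tendsto_pow_atTop_atTop_of_one_lt one_lt_two))
  exact le_of_tendsto_of_tendsto ((tendsto_dyadicApprox hm s).dist (tendsto_dyadicApprox hm t))
    hbound (Eventually.of_forall fun n => dist_dyadicApprox_le hm n hs hst)

theorem lipschitzOnWith_dyadicLimit [CompleteSpace X] (hm : IsMidpointMap m) :
    LipschitzOnWith (nndist x y) (dyadicLimit m x y) (Ici 0) := by
  refine LipschitzOnWith.of_dist_le_mul fun s hs t ht => ?_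
  rcases le_total s t with hst | hts
  · rw [Real.dist_eq, abs_sub_comm, abs_of_nonneg (sub_nonneg.2 hst), coe_nndist]
    exact dist_dyadicLimit_le hm hs hst
  · rw [Real.dist_eq, abs_of_nonneg (sub_nonneg.2 hts), coe_nndist, dist_comm]
    exact dist_dyadicLimit_le hm ht hts

end DyadicLimit

theorem LipschitzOnWith.eVariationOn_comp_unitInterval_le {E : Type*} [PseudoEMetricSpace E]
    {f : ℝ → E} {K : ℝ≥0} (hf : LipschitzOnWith K f I) :
    eVariationOn (fun t : I => f t) univ ≤ K := by
  have hval : eVariationOn (Subtype.val : I → ℝ) univ ≤ 1 := by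
    have hmono : MonotoneOn (Subtype.val : I → ℝ) univ := fun _ _ _ _ h => h
    calc _ ≤ eVariationOn (Subtype.val : I → ℝ) (univ ∩ Icc 0 1) :=
          eVariationOn.mono _ fun t _ => ⟨mem_univ t, t.2⟩
      _ = 1 := by rw [hmono.eVariationOn_eq (mem_univ 0) (mem_univ 1)]; simp
  calc _ ≤ K * eVariationOn (Subtype.val : I → ℝ) univ :=
        hf.comp_eVariationOn_le fun t _ => t.2
    _ ≤ K * 1 := by gcongr
    _ = K := mul_one _

namespace IsMidpointMap

variable [MetricSpace X] [CompleteSpace X] {m : X → X → X}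

theorem exists_path_eVariationOn_le_edist (hm : IsMidpointMap m) (x y : X) :
    ∃ γ : Path x y, eVariationOn γ univ ≤ edist x y := by
  have hc : LipschitzOnWith (nndist x y) (dyadicLimit m x y) I :=
    (lipschitzOnWith_dyadicLimit hm).mono fun _ ht => ht.1
  let γ : Path x y :=
    { toFun := fun t => dyadicLimit m x y t
      continuous_toFun := hc.continuousOn.comp_continuous continuous_subtype_val Subtype.prop
      source' := dyadicLimit_zero
      target' := dyadicLimit_one }
  refine ⟨γ, ?_⟩
  rw [edist_nndist]
  exact hc.eVariationOn_comp_unitInterval_le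

theorem isPathMetricSpace (hm : IsMidpointMap m) : IsPathMetricSpace X := fun x y =>
  have ⟨γ, hγ⟩ := hm.exists_path_eVariationOn_le_edist x y
  le_antisymm (le_iInf fun γ' => γ'.edist_le_eVariationOn) ((iInf_le _ γ).trans hγ)

end IsMidpointMap

end

/-- A compact metric space is a path metric space if and only if it admits approximate
midpoints: for all `x, y` and `ε > 0` there is `z` with
`max (d(x,z)) (d(y,z)) ≤ d(x,y)/2 + ε`. -/
theorem isPathMetricSpace_iff_approx_midpoints (X : Type*) [MetricSpace X] [CompactSpace X] :
    IsPathMetricSpace X ↔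
      ∀ x y : X, ∀ ε > (0 : ℝ), ∃ z : X,
        max (dist x z) (dist y z) ≤ dist x y / 2 + ε := by
  refine ⟨fun h x y _ hε => h.exists_approx_midpoint x y hε, fun H => ?_⟩
  obtain ⟨m, hm⟩ := exists_isMidpointMap_of_approx H
  exact hm.isPathMetricSpace
end

section
/- Let (G,d_G) be a connected finite metric graph, r ∈ G, and for α > 0 let N_E(α) denote the number of edges of G of length at most α. For any d > 0, every connected component B of the set B_{d,α} = {x ∈ G : d − α ≤ d_G(r,x) ≤ d + α} satisfies diam(B) ≤ 4·(2 + N_E(4α))·α. -/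
open Set Metric

noncomputable section

/-- A finite metric graph structure on a metric space `G`: a finite set of edges, each
isometrically parametrized by arc length on `[0, len e]`, covering `G`, with pairwise
disjoint open edges, and such that the metric of `G` is the associated shortest-path
metric (i.e. the largest pseudometric making all edge parametrizations 1-Lipschitz). -/
structure MetricGraphStruct (G : Type*) [MetricSpace G] where
  /-- the (finite) index type of edges -/
  E : Type
  fintypeE : Fintype E
  /-- length of each edge -/
  len : E → ℝ
  len_pos : ∀ e, 0 < len e
  /-- arc-length parametrization of each edge on `[0, len e]` -/
  param : E → ℝ → G
  param_lipschitz : ∀ e, LipschitzOnWith 1 (param e) (Set.Icc 0 (len e))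
  /-- the edges cover `G` -/
  cover : ∀ x : G, ∃ e, ∃ t ∈ Set.Icc 0 (len e), param e t = x
  /-- each open edge is simple -/
  injOn : ∀ e, Set.InjOn (param e) (Set.Ioo 0 (len e))
  /-- open edges are pairwise disjoint -/
  disjoint_interiors : ∀ e₁ e₂, e₁ ≠ e₂ → ∀ s ∈ Set.Ioo 0 (len e₁), ∀ t ∈ Set.Ioo 0 (len e₂),
    param e₁ s ≠ param e₂ t
  /-- endpoints of edges do not lie in open edges -/
  endpoint_not_interior : ∀ e e', ∀ t ∈ Set.Ioo 0 (len e'),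
    param e 0 ≠ param e' t ∧ param e (len e) ≠ param e' t
  /-- the metric of `G` is the shortest-path metric: it is maximal among pseudometrics
  making every edge parametrization 1-Lipschitz -/
  dist_maximal : ∀ δ : G → G → ℝ, (∀ p, δ p p = 0) → (∀ p q, δ p q = δ q p) →
    (∀ p q s, δ p s ≤ δ p q + δ q s) →
    (∀ e, ∀ s ∈ Set.Icc 0 (len e), ∀ t ∈ Set.Icc 0 (len e),
      δ (param e s) (param e t) ≤ |s - t|) →
    ∀ p q, δ p q ≤ dist p q

namespace MetricGraphStruct

variable {G : Type*} [MetricSpace G] (M : MetricGraphStruct G)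

/-- first endpoint of an edge -/
def src (e : M.E) : G := M.param e 0

/-- second endpoint of an edge -/
def tgt (e : M.E) : G := M.param e (M.len e)

/-- the set of vertices (endpoints of edges) -/
def vertexSet : Set G := {v | ∃ e, v = M.src e ∨ v = M.tgt e}

/-- `N_E(α)`: the number of edges of length at most `α` -/
def NE (α : ℝ) : ℕ := Nat.card {e : M.E // M.len e ≤ α}

/-- the first Betti number of a connected finite graph: `#E - #V + 1` -/
def betti1 : ℕ := Nat.card M.E + 1 - Nat.card M.vertexSet

end MetricGraphStruct

end

/-!
Along an edge `γ : [0, L] → G` whose interior avoids `r`, the function `t ↦ d(r, γ t)` is the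
tent `min (d(r, γ 0) + t) (d(r, γ L) + L - t)`: the triangle inequality gives `≤`, and `≥` holds
because the metric is the largest one for which the edges are `1`-Lipschitz, so any function that
is `1`-Lipschitz along every edge, like the tent on `e` extended by `d(r, ·)` elsewhere, is
`1`-Lipschitz for it. If `r = γ t₀` is interior, the edge splits at `t₀` into two tents. On a tent
of slopes `±1` the band `d - α ≤ · ≤ d + α` is at most two intervals of length `≤ 4α`, so the band
meets each edge in at most four such intervals, pairwise disjoint because `r` is not in the band
when `α < d`.

Their images ("pieces") cover the component `B` and have diameter `≤ 4α`. A piece containing both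
ends of its edge is the whole edge, which then has length `≤ 4α`; any other piece meets the other
pieces only at the one end of its edge it contains. Walking from a piece containing `y` to one
containing `z` along a path of the intersection graph of the pieces (which is connected since `B`
is), one pays `4α` for the first and last piece and for each whole edge, and nothing for the other
pieces, which are entered and left through the same point. When `d ≤ α` the band lies in the ball
of radius `2α` around `r`.
-/

open Function

section CoverGraph

variable {X ι : Type*}

def coverGraph (C : Set X) (F : ι → Set X) : SimpleGraph ι where
  Adj i j := i ≠ j ∧ (C ∩ F i ∩ F j).Nonempty
  symm := ⟨fun _ _ h ↦ ⟨h.1.symm, by rw [inter_right_comm]; exact h.2⟩⟩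
  loopless := ⟨fun _ h ↦ h.1 rfl⟩

variable {C : Set X} {F : ι → Set X}

theorem coverGraph_adj {i j : ι} :
    (coverGraph C F).Adj i j ↔ i ≠ j ∧ (C ∩ F i ∩ F j).Nonempty :=
  Iff.rfl

theorem IsPreconnected.exists_reachable_coverGraph [TopologicalSpace X] [Finite ι]
    (hC : IsPreconnected C) (hF : ∀ i, IsClosed (F i)) (hcov : C ⊆ ⋃ i, F i)
    {i : ι} {y z : X} (hy : y ∈ C ∩ F i) (hz : z ∈ C) :
    ∃ j, z ∈ F j ∧ (coverGraph C F).Reachable i j := by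
  by_contra! hfar
  let R := {j | (coverGraph C F).Reachable i j}
  have hclosed (S : Set ι) : IsClosed (⋃ j ∈ S, F j) :=
    S.toFinite.isClosed_biUnion fun j _ ↦ hF j
  have hsplit : C ⊆ (⋃ j ∈ R, F j) ∪ ⋃ j ∈ Rᶜ, F j := by
    rwa [← biUnion_union, union_compl_self, biUnion_univ]
  obtain ⟨p, hpC, hpR, hpRc⟩ := isPreconnected_closed_iff.mp hC _ _ (hclosed R) (hclosed Rᶜ)
    hsplit ⟨y, hy.1, mem_biUnion (SimpleGraph.Reachable.refl i) hy.2⟩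
    ⟨z, hz, by obtain ⟨j, hj⟩ := mem_iUnion.mp (hcov hz); exact mem_biUnion (hfar j hj) hj⟩
  obtain ⟨j, hjR, hpj⟩ := mem_iUnion₂.mp hpR
  obtain ⟨k, hkR, hpk⟩ := mem_iUnion₂.mp hpRc
  have hadj : (coverGraph C F).Adj j k :=
    coverGraph_adj.mpr ⟨fun h ↦ hkR (h ▸ hjR), p, ⟨hpC, hpj⟩, hpk⟩
  exact hkR (hjR.trans hadj.reachable)

variable {Φ : Finset ι} {gate : ι → X} (hgate : ∀ i ∉ Φ, ∀ j ≠ i, C ∩ F i ∩ F j ⊆ {gate i})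
include hgate

theorem exists_mem_inter_gate {i k : ι} (hadj : (coverGraph C F).Adj i k) :
    ∃ q ∈ C ∩ F i ∩ F k, k ∈ Φ ∨ q = gate k := by
  obtain ⟨hik, q, hq⟩ := coverGraph_adj.mp hadj
  refine ⟨q, hq, or_iff_not_imp_left.mpr fun hk ↦ hgate k hk i hik ?_⟩
  exact ⟨⟨hq.1.1, hq.2⟩, hq.1.2⟩

variable [PseudoMetricSpace X] {D : ℝ} (hD : ∀ i, ∀ p ∈ F i, ∀ q ∈ F i, dist p q ≤ D)
  [DecidableEq ι]
include hD

theorem dist_le_of_walk_of_gate : ∀ {i j : ι} (w : (coverGraph C F).Walk i j) {q z : X},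
    q ∈ C ∩ F i → (i ∈ Φ ∨ q = gate i) → z ∈ F j →
    dist q z ≤ D * (1 + (w.support.filter (· ∈ Φ)).length)
  | i, _, .nil, q, z, hq, _, hz => by
    have := hD _ q hq.2 z hz
    have hD0 : 0 ≤ D := dist_nonneg.trans this
    by_cases hi : i ∈ Φ <;> simp [hi] <;> linarith
  | i, _, .cons (v := k) hadj w, q, z, hq, hqgate, hz => by
    obtain ⟨q', hq', hnext⟩ := exists_mem_inter_gate hgate hadj
    have ih := dist_le_of_walk_of_gate w ⟨hq'.1.1, hq'.2⟩ hnext hz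
    by_cases hi : i ∈ Φ
    · have := hD i q hq.2 q' hq'.1.2
      simp only [SimpleGraph.Walk.support_cons, List.filter_cons, hi, decide_true,
        List.length_cons, if_true, Nat.cast_add, Nat.cast_one]
      linarith [dist_triangle q q' z]
    · -- a piece outside `Φ` is entered and left through its gate, at no cost
      have hq'g : q' = gate i := hgate i hi k (coverGraph_adj.mp hadj).1.symm hq'
      have hqg : q = gate i := hqgate.resolve_left hi
      simp only [SimpleGraph.Walk.support_cons, List.filter_cons, hi, decide_false]
      simpa [hqg, hq'g] using ih

theorem dist_le_of_walk {i j : ι} (w : (coverGraph C F).Walk i j) {q z : X}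
    (hq : q ∈ C ∩ F i) (hz : z ∈ F j) :
    dist q z ≤ D * (2 + (w.support.tail.filter (· ∈ Φ)).length) := by
  cases w with
  | nil =>
    have := hD _ q hq.2 z hz
    have hD0 : 0 ≤ D := dist_nonneg.trans this
    simp only [SimpleGraph.Walk.support_nil, List.tail_cons, List.filter_nil, List.length_nil,
      Nat.cast_zero]
    linarith
  | cons hadj w =>
    obtain ⟨q', hq', hnext⟩ := exists_mem_inter_gate hgate hadj
    have := dist_le_of_walk_of_gate hgate hD w ⟨hq'.1.1, hq'.2⟩ hnext hz
    have := hD _ q hq.2 q' hq'.1.2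
    rw [SimpleGraph.Walk.support_cons, List.tail_cons]
    linarith [dist_triangle q q' z]

theorem IsPreconnected.dist_le_of_gate [Finite ι] (hC : IsPreconnected C)
    (hF : ∀ i, IsClosed (F i)) (hcov : C ⊆ ⋃ i, F i) {y z : X} (hy : y ∈ C) (hz : z ∈ C) :
    dist y z ≤ D * (2 + Φ.card) := by
  obtain ⟨i, hyi⟩ := mem_iUnion.mp (hcov hy)
  obtain ⟨j, hzj, hij⟩ := hC.exists_reachable_coverGraph hF hcov ⟨hy, hyi⟩ hz
  obtain ⟨w, hw⟩ := hij.some.toPath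
  have hD0 : 0 ≤ D := dist_nonneg.trans (hD i y hyi y hyi)
  have hcount : (w.support.tail.filter (· ∈ Φ)).length ≤ Φ.card := by
    have hnodup := (hw.support_nodup.sublist w.support.tail_sublist).filter (· ∈ Φ)
    rw [← List.toFinset_card_of_nodup hnodup]
    exact Finset.card_le_card fun k hk ↦
      of_decide_eq_true (List.mem_filter.mp (List.mem_toFinset.mp hk)).2
  calc dist y z ≤ D * (2 + (w.support.tail.filter (· ∈ Φ)).length) :=
        dist_le_of_walk hgate hD w ⟨hy, hyi⟩ hzj
    _ ≤ D * (2 + Φ.card) := by gcongr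

end CoverGraph

theorem abs_tent_sub_le (A B s t : ℝ) :
    |min (A + s) (B - s) - min (A + t) (B - t)| ≤ |s - t| := by
  refine (abs_min_sub_min_le_max _ _ _ _).trans (max_le ?_ ?_)
  · rw [add_sub_add_left_eq_sub]
  · rw [sub_sub_sub_cancel_left, abs_sub_comm]

structure IsSmallPartition {ι : Type*} (S : Set ℝ) (ℓ : ℝ) (J : ι → Set ℝ) : Prop where
  isCompact : ∀ k, IsCompact (J k)
  subset : ∀ k, J k ⊆ S
  cover : S ⊆ ⋃ k, J k
  dist_le : ∀ k, ∀ s ∈ J k, ∀ t ∈ J k, dist s t ≤ ℓ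
  disjoint : Pairwise (Disjoint on J)

namespace IsSmallPartition

variable {ι κ : Type*} {ℓ : ℝ}

theorem empty : IsSmallPartition (∅ : Set ℝ) ℓ fun _ : ι ↦ (∅ : Set ℝ) where
  isCompact _ := isCompact_empty
  subset _ := subset_rfl
  cover := empty_subset _
  dist_le _ _ h := h.elim
  disjoint _ _ _ := empty_disjoint _

theorem sumElim {S₁ S₂ : Set ℝ} {J₁ : ι → Set ℝ} {J₂ : κ → Set ℝ}
    (h₁ : IsSmallPartition S₁ ℓ J₁) (h₂ : IsSmallPartition S₂ ℓ J₂) (hS : Disjoint S₁ S₂) :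
    IsSmallPartition (S₁ ∪ S₂) ℓ (Sum.elim J₁ J₂) where
  isCompact := Sum.forall.mpr ⟨h₁.isCompact, h₂.isCompact⟩
  subset := Sum.forall.mpr ⟨fun k ↦ (h₁.subset k).trans subset_union_left,
    fun k ↦ (h₂.subset k).trans subset_union_right⟩
  cover := by
    rw [iUnion_sum]
    exact union_subset_union h₁.cover h₂.cover
  dist_le := Sum.forall.mpr ⟨h₁.dist_le, h₂.dist_le⟩
  disjoint := by
    rintro (i | i) (j | j) hij
    · exact h₁.disjoint fun h ↦ hij (congrArg Sum.inl h)
    · exact hS.mono (h₁.subset i) (h₂.subset j)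
    · exact hS.symm.mono (h₂.subset i) (h₁.subset j)
    · exact h₂.disjoint fun h ↦ hij (congrArg Sum.inr h)

end IsSmallPartition

section Tent

variable {p q A B d α : ℝ} {f : ℝ → ℝ} (hf : ∀ t ∈ Icc p q, f t = min (A + t) (B - t))
include hf

theorem tent_mem_band_iff {t : ℝ} (ht : t ∈ Icc p q) :
    f t ∈ Icc (d - α) (d + α) ↔
      d - α ≤ A + t ∧ d - α ≤ B - t ∧ (A + t ≤ d + α ∨ B - t ≤ d + α) := by
  rw [hf t ht, mem_Icc, le_min_iff, min_le_iff, and_assoc]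

theorem isSmallPartition_tent_of_le (hAB : A + B ≤ 2 * (d + α)) :
    IsSmallPartition (Icc p q ∩ f ⁻¹' Icc (d - α) (d + α)) (4 * α)
      fun b ↦ bif b then Icc (max p (d - α - A)) (min q (B - d + α)) else ∅ where
  isCompact := Bool.forall_bool.mpr ⟨isCompact_empty, isCompact_Icc⟩
  subset := by
    refine Bool.forall_bool.mpr ⟨empty_subset _, fun t ht ↦ ?_⟩
    simp only [cond_true, mem_Icc, max_le_iff, le_min_iff] at ht
    refine ⟨⟨ht.1.1, ht.2.1⟩, (tent_mem_band_iff hf ⟨ht.1.1, ht.2.1⟩).mpr ?_⟩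
    grind
  cover := by
    rintro t ⟨htpq, htf⟩
    rw [mem_preimage, tent_mem_band_iff hf htpq] at htf
    refine mem_iUnion.mpr ⟨true, ?_⟩
    simp only [cond_true, mem_Icc, max_le_iff, le_min_iff]
    grind
  dist_le := by
    refine Bool.forall_bool.mpr ⟨fun _ h ↦ h.elim, fun s hs t ht ↦ ?_⟩
    exact (Real.dist_le_of_mem_Icc hs ht).trans (by grind)
  disjoint := pairwise_on_bool.mpr (disjoint_empty _)

theorem isSmallPartition_tent_of_lt (hAB : 2 * (d + α) < A + B) :
    IsSmallPartition (Icc p q ∩ f ⁻¹' Icc (d - α) (d + α)) (4 * α)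
      fun b ↦ bif b then Icc (max p (d - α - A)) (min q (d + α - A))
        else Icc (max p (B - d - α)) (min q (B - d + α)) where
  isCompact := Bool.forall_bool.mpr ⟨isCompact_Icc, isCompact_Icc⟩
  subset := by
    refine Bool.forall_bool.mpr ⟨fun t ht ↦ ?_, fun t ht ↦ ?_⟩ <;>
      simp only [cond_true, cond_false, mem_Icc, max_le_iff, le_min_iff] at ht <;>
      refine ⟨⟨ht.1.1, ht.2.1⟩, (tent_mem_band_iff hf ⟨ht.1.1, ht.2.1⟩).mpr ?_⟩ <;>
      grind
  cover := by
    rintro t ⟨htpq, htf⟩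
    rw [mem_preimage, tent_mem_band_iff hf htpq] at htf
    rcases htf.2.2 with hup | hdown
    · refine mem_iUnion.mpr ⟨true, ?_⟩
      simp only [cond_true, mem_Icc, max_le_iff, le_min_iff]
      grind
    · refine mem_iUnion.mpr ⟨false, ?_⟩
      simp only [cond_false, mem_Icc, max_le_iff, le_min_iff]
      grind
  dist_le := by
    refine Bool.forall_bool.mpr ⟨fun s hs t ht ↦ ?_, fun s hs t ht ↦ ?_⟩ <;>
      exact (Real.dist_le_of_mem_Icc hs ht).trans (by grind)
  disjoint := by
    refine pairwise_on_bool.mpr (disjoint_left.mpr fun t h₁ h₂ ↦ ?_)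
    simp only [mem_Icc, max_le_iff, le_min_iff] at h₁ h₂
    linarith

theorem exists_isSmallPartition_tent :
    ∃ J : Bool → Set ℝ, IsSmallPartition (Icc p q ∩ f ⁻¹' Icc (d - α) (d + α)) (4 * α) J := by
  rcases le_or_gt (A + B) (2 * (d + α)) with hAB | hAB
  exacts [⟨_, isSmallPartition_tent_of_le hf hAB⟩, ⟨_, isSmallPartition_tent_of_lt hf hAB⟩]

end Tent

namespace MetricGraphStruct

variable {G : Type*} [MetricSpace G] (M : MetricGraphStruct G)

theorem dist_param_le {e : M.E} {s t : ℝ} (hs : s ∈ Icc 0 (M.len e))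
    (ht : t ∈ Icc 0 (M.len e)) : dist (M.param e s) (M.param e t) ≤ |s - t| := by
  simpa [Real.dist_eq] using (M.param_lipschitz e).dist_le_mul s hs t ht

theorem eq_of_param_eq_param {e e' : M.E} {s t : ℝ} (hs : s ∈ Ioo 0 (M.len e))
    (ht : t ∈ Icc 0 (M.len e')) (h : M.param e s = M.param e' t) : e' = e ∧ t = s := by
  rcases ht.1.eq_or_lt with rfl | ht0
  · exact absurd h.symm (M.endpoint_not_interior e' e s hs).1
  rcases ht.2.eq_or_lt with rfl | htL
  · exact absurd h.symm (M.endpoint_not_interior e' e s hs).2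
  by_cases he : e' = e
  · subst he
    exact ⟨rfl, M.injOn e' ⟨ht0, htL⟩ hs h.symm⟩
  · exact absurd h (M.disjoint_interiors e e' (Ne.symm he) s hs t ⟨ht0, htL⟩)

theorem le_dist_param (r : G) (e : M.E) {g : ℝ → ℝ} (hg : ∀ s t, |g s - g t| ≤ |s - t|)
    (hg0 : g 0 = dist r (M.src e)) (hgL : g (M.len e) = dist r (M.tgt e))
    (hgr : ∀ t ∈ Ioo 0 (M.len e), M.param e t = r → g t = 0) {t : ℝ}
    (ht : t ∈ Icc 0 (M.len e)) : g t ≤ dist r (M.param e t) := by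
  classical
  set I := Ioo 0 (M.len e)
  -- `φ` is `g` along the open edge `e` and `dist r` elsewhere; it is `1`-Lipschitz along every
  -- edge, hence for the path metric, and it vanishes at `r`.
  let φ : G → ℝ := fun p ↦
    if p ∈ M.param e '' I then g (Function.invFunOn (M.param e) I p) else dist r p
  have hφ_off : ∀ p ∉ M.param e '' I, φ p = dist r p := fun p hp ↦ if_neg hp
  have hφ_on : ∀ t ∈ Icc 0 (M.len e), φ (M.param e t) = g t := by
    intro t ht
    by_cases hmem : M.param e t ∈ M.param e '' I
    · obtain ⟨s, hs, hst⟩ := hmem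
      obtain ⟨-, rfl⟩ := M.eq_of_param_eq_param hs ht hst
      simp only [φ, if_pos (mem_image_of_mem _ hs)]
      rw [(M.injOn e).leftInvOn_invFunOn hs]
    · rw [hφ_off _ hmem]
      have htI : t ∉ I := fun htI ↦ hmem (mem_image_of_mem _ htI)
      rcases (Icc_sdiff_Ioo_same (M.len_pos e).le).subset ⟨ht, htI⟩ with rfl | rfl
      exacts [hg0.symm, hgL.symm]
  have hφ_r : φ r = 0 := by
    by_cases hr : r ∈ M.param e '' I
    · obtain ⟨s, hs, rfl⟩ := hr
      rw [hφ_on s (Ioo_subset_Icc_self hs)]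
      exact hgr s hs rfl
    · rw [hφ_off r hr, dist_self]
  have hlip : ∀ p q, |φ p - φ q| ≤ dist p q := by
    refine M.dist_maximal _ (by simp) (fun _ _ ↦ abs_sub_comm _ _) (fun _ _ _ ↦ abs_sub_le _ _ _) ?_
    intro e' s hs t ht
    by_cases he : e' = e
    · subst e'
      rw [hφ_on s hs, hφ_on t ht]
      exact hg s t
    · have hoff : ∀ u ∈ Icc 0 (M.len e'), φ (M.param e' u) = dist r (M.param e' u) := by
        intro u hu
        refine hφ_off _ ?_
        rintro ⟨v, hv, hvu⟩
        exact he (M.eq_of_param_eq_param hv hu hvu).1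
      rw [hoff s hs, hoff t ht, dist_comm r, dist_comm r]
      exact (abs_dist_sub_le _ _ _).trans (M.dist_param_le hs ht)
  have := hlip (M.param e t) r
  rw [hφ_on t ht, hφ_r, sub_zero, dist_comm] at this
  exact (le_abs_self _).trans this

theorem dist_param_le_min (r : G) {e : M.E} {t : ℝ} (ht : t ∈ Icc 0 (M.len e)) :
    dist r (M.param e t) ≤ min (dist r (M.src e) + t) (dist r (M.tgt e) + M.len e - t) := by
  have h0 : dist (M.src e) (M.param e t) ≤ |0 - t| :=
    M.dist_param_le (left_mem_Icc.mpr (M.len_pos e).le) ht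
  have hL : dist (M.tgt e) (M.param e t) ≤ |M.len e - t| :=
    M.dist_param_le (right_mem_Icc.mpr (M.len_pos e).le) ht
  rw [zero_sub, abs_neg, abs_of_nonneg ht.1] at h0
  rw [abs_of_nonneg (sub_nonneg.mpr ht.2)] at hL
  refine le_min ?_ ?_
  · linarith [dist_triangle r (M.src e) (M.param e t)]
  · linarith [dist_triangle r (M.tgt e) (M.param e t)]

theorem dist_param_eq_min (r : G) {e : M.E} (hr : ∀ t ∈ Ioo 0 (M.len e), M.param e t ≠ r)
    {t : ℝ} (ht : t ∈ Icc 0 (M.len e)) :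
    dist r (M.param e t) = min (dist r (M.src e) + t) (dist r (M.tgt e) + M.len e - t) := by
  have hL := (M.len_pos e).le
  refine le_antisymm (M.dist_param_le_min r ht)
    (M.le_dist_param r e (abs_tent_sub_le _ _) ?_ ?_ (fun t ht h ↦ absurd h (hr t ht)) ht)
  · exact le_antisymm ((min_le_left _ _).trans (add_zero _).le)
      (M.dist_param_le_min r (left_mem_Icc.mpr hL))
  · exact le_antisymm ((min_le_right _ _).trans (add_sub_cancel_right _ _).le)
      (M.dist_param_le_min r (right_mem_Icc.mpr hL))

theorem dist_param_eq_min_abs (r : G) {e : M.E} {t₀ : ℝ} (ht₀ : t₀ ∈ Ioo 0 (M.len e))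
    (hr : M.param e t₀ = r) {t : ℝ} (ht : t ∈ Icc 0 (M.len e)) :
    dist r (M.param e t) =
      min (min (dist r (M.src e) + t) (dist r (M.tgt e) + M.len e - t)) |t - t₀| := by
  have hL := (M.len_pos e).le
  have hle : ∀ t ∈ Icc 0 (M.len e), dist r (M.param e t) ≤
      min (min (dist r (M.src e) + t) (dist r (M.tgt e) + M.len e - t)) |t - t₀| := fun t ht ↦
    le_min (M.dist_param_le_min r ht)
      (hr ▸ M.dist_param_le (Ioo_subset_Icc_self ht₀) ht |>.trans_eq (abs_sub_comm _ _))
  refine le_antisymm (hle t ht) (M.le_dist_param r e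
    (g := fun t ↦ min (min (dist r (M.src e) + t) (dist r (M.tgt e) + M.len e - t)) |t - t₀|)
    ?_ ?_ ?_ ?_ ht)
  · intro s t
    refine (abs_min_sub_min_le_max _ _ _ _).trans (max_le (abs_tent_sub_le _ _ _ _) ?_)
    exact (abs_abs_sub_abs_le_abs_sub _ _).trans_eq (by rw [sub_sub_sub_cancel_right])
  · exact le_antisymm ((min_le_left _ _).trans ((min_le_left _ _).trans (add_zero _).le))
      (hle 0 (left_mem_Icc.mpr hL))
  · exact le_antisymm
      ((min_le_left _ _).trans ((min_le_right _ _).trans (add_sub_cancel_right _ _).le))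
      (hle _ (right_mem_Icc.mpr hL))
  · intro t ht hrt
    obtain rfl := M.injOn e ht ht₀ (hrt.trans hr.symm)
    rw [sub_self, abs_zero]
    have hb := dist_nonneg (x := r) (y := M.tgt e)
    exact min_eq_right (le_min (add_nonneg dist_nonneg ht.1.le) (by linarith [ht.2]))

def bandParam (r : G) (d α : ℝ) (e : M.E) : Set ℝ :=
  Icc 0 (M.len e) ∩ (fun t ↦ dist r (M.param e t)) ⁻¹' Icc (d - α) (d + α)

theorem exists_isSmallPartition_bandParam (r : G) {d α : ℝ} (hdα : α < d) (e : M.E) :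
    ∃ J : Bool ⊕ Bool → Set ℝ, IsSmallPartition (M.bandParam r d α e) (4 * α) J := by
  set f := fun t ↦ dist r (M.param e t)
  have hb := dist_nonneg (x := r) (y := M.tgt e)
  by_cases hr : ∃ t₀ ∈ Ioo 0 (M.len e), M.param e t₀ = r
  · obtain ⟨t₀, ht₀, hr⟩ := hr
    have hleft : ∀ t ∈ Icc 0 t₀, f t = min (dist r (M.src e) + t) (t₀ - t) := by
      intro t ht
      show dist r (M.param e t) = _
      rw [M.dist_param_eq_min_abs r ht₀ hr ⟨ht.1, ht.2.trans ht₀.2.le⟩]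
      grind
    have hright : ∀ t ∈ Icc t₀ (M.len e), f t = min (-t₀ + t) (dist r (M.tgt e) + M.len e - t) := by
      intro t ht
      show dist r (M.param e t) = _
      rw [M.dist_param_eq_min_abs r ht₀ hr ⟨ht₀.1.le.trans ht.1, ht.2⟩]
      have ha := dist_nonneg (x := r) (y := M.src e)
      grind
    obtain ⟨J₁, hJ₁⟩ := exists_isSmallPartition_tent (d := d) (α := α) hleft
    obtain ⟨J₂, hJ₂⟩ := exists_isSmallPartition_tent (d := d) (α := α) hright
    have hsplit : M.bandParam r d α e = (Icc 0 t₀ ∩ f ⁻¹' Icc (d - α) (d + α)) ∪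
        (Icc t₀ (M.len e) ∩ f ⁻¹' Icc (d - α) (d + α)) := by
      rw [← union_inter_distrib_right, Icc_union_Icc_eq_Icc ht₀.1.le ht₀.2.le]
      rfl
    have hdisj : Disjoint (Icc 0 t₀ ∩ f ⁻¹' Icc (d - α) (d + α))
        (Icc t₀ (M.len e) ∩ f ⁻¹' Icc (d - α) (d + α)) := by
      refine disjoint_left.mpr fun t h₁ h₂ ↦ ?_
      obtain rfl : t = t₀ := le_antisymm h₁.1.2 h₂.1.1
      have : f t = 0 := by simp only [f, hr, dist_self]
      linarith [h₁.2.1]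
    exact ⟨_, hsplit ▸ hJ₁.sumElim hJ₂ hdisj⟩
  · push Not at hr
    obtain ⟨J, hJ⟩ := exists_isSmallPartition_tent (d := d) (α := α)
      fun t ht ↦ M.dist_param_eq_min r hr ht
    rw [← union_empty (M.bandParam r d α e)]
    exact ⟨_, hJ.sumElim (IsSmallPartition.empty (ι := Bool)) (disjoint_empty _)⟩

section Pieces

variable {κ : Type*} {ℓ : ℝ} {S : M.E → Set ℝ} {J : M.E → κ → Set ℝ}

def IsFullPiece (J : M.E → κ → Set ℝ) (i : M.E × κ) : Prop :=
  (0 : ℝ) ∈ J i.1 i.2 ∧ M.len i.1 ∈ J i.1 i.2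

theorem isClosed_image_param (hS : ∀ e, S e ⊆ Icc 0 (M.len e))
    (hJ : ∀ e, IsSmallPartition (S e) ℓ (J e)) (i : M.E × κ) :
    IsClosed (M.param i.1 '' J i.1 i.2) :=
  ((hJ i.1).isCompact i.2 |>.image_of_continuousOn
    ((M.param_lipschitz i.1).continuousOn.mono ((hJ i.1).subset i.2 |>.trans (hS i.1)))).isClosed

theorem dist_le_of_mem_image_param (hS : ∀ e, S e ⊆ Icc 0 (M.len e))
    (hJ : ∀ e, IsSmallPartition (S e) ℓ (J e)) (i : M.E × κ) :
    ∀ p ∈ M.param i.1 '' J i.1 i.2, ∀ q ∈ M.param i.1 '' J i.1 i.2, dist p q ≤ ℓ := by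
  rintro _ ⟨s, hs, rfl⟩ _ ⟨t, ht, rfl⟩
  have hsub := (hJ i.1).subset i.2 |>.trans (hS i.1)
  exact (M.dist_param_le (hsub hs) (hsub ht)).trans
    (Real.dist_eq s t ▸ (hJ i.1).dist_le i.2 s hs t ht)

theorem image_param_inter_subset_gate (hS : ∀ e, S e ⊆ Icc 0 (M.len e))
    (hJ : ∀ e, IsSmallPartition (S e) ℓ (J e)) {i j : M.E × κ}
    [Decidable ((0 : ℝ) ∈ J i.1 i.2)] (hi : ¬M.IsFullPiece J i) (hji : j ≠ i) :
    M.param i.1 '' J i.1 i.2 ∩ M.param j.1 '' J j.1 j.2 ⊆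
      {if (0 : ℝ) ∈ J i.1 i.2 then M.src i.1 else M.tgt i.1} := by
  rintro _ ⟨⟨s, hs, rfl⟩, t, ht, hst⟩
  obtain ⟨e, k⟩ := i
  obtain ⟨e', k'⟩ := j
  have hsI := hS e ((hJ e).subset k hs)
  by_cases hsIoo : s ∈ Ioo 0 (M.len e)
  · obtain ⟨rfl, rfl⟩ := M.eq_of_param_eq_param hsIoo (hS e' ((hJ e').subset k' ht)) hst.symm
    have hkk' : k' = k := by_contra fun h ↦ (hJ e').disjoint h |>.ne_of_mem ht hs rfl
    exact absurd (by rw [hkk']) hji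
  · rcases (Icc_sdiff_Ioo_same (M.len_pos e).le).subset ⟨hsI, hsIoo⟩ with rfl | rfl
    · simp only [if_pos hs, mem_singleton_iff, src]
    · have h0 : (0 : ℝ) ∉ J e k := fun h0 ↦ hi ⟨h0, hs⟩
      simp only [if_neg h0, mem_singleton_iff, tgt]

-- A full piece forces its edge to have length `≤ ℓ`, and two full pieces of the same edge
-- would share the point `0`.
theorem card_filter_isFullPiece_le [Fintype M.E] [Fintype κ] [DecidablePred (M.IsFullPiece J)]
    (hJ : ∀ e, IsSmallPartition (S e) ℓ (J e)) :
    (Finset.univ.filter (M.IsFullPiece J)).card ≤ M.NE ℓ := by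
  rw [NE, Nat.card_eq_fintype_card, Fintype.card_subtype]
  refine Finset.card_le_card_of_injOn Prod.fst ?_ ?_
  · rintro ⟨e, k⟩ hfull
    obtain ⟨h0, hL⟩ := (Finset.mem_filter.mp hfull).2
    have := (hJ e).dist_le k _ h0 _ hL
    rw [Real.dist_eq, zero_sub, abs_neg, abs_of_pos (M.len_pos e)] at this
    exact Finset.mem_filter.mpr ⟨Finset.mem_univ _, this⟩
  · rintro ⟨e, k⟩ hfull ⟨e', k'⟩ hfull' (rfl : e = e')
    have h0 : (0 : ℝ) ∈ J e k := (Finset.mem_filter.mp hfull).2.1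
    have h0' : (0 : ℝ) ∈ J e k' := (Finset.mem_filter.mp hfull').2.1
    by_contra hne
    exact (hJ e).disjoint (fun h ↦ hne (by rw [h])) |>.ne_of_mem h0 h0' rfl

theorem band_subset_iUnion_image_param (r : G) {d α : ℝ}
    (hJ : ∀ e, IsSmallPartition (M.bandParam r d α e) ℓ (J e)) :
    {y | d - α ≤ dist r y ∧ dist r y ≤ d + α} ⊆ ⋃ i : M.E × κ, M.param i.1 '' J i.1 i.2 := by
  intro p hp
  obtain ⟨e, t, ht, rfl⟩ := M.cover p
  obtain ⟨k, hk⟩ := mem_iUnion.mp ((hJ e).cover ⟨ht, hp⟩)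
  exact mem_iUnion.mpr ⟨(e, k), mem_image_of_mem _ hk⟩

end Pieces

theorem dist_le_of_isPreconnected_subset_band (r : G) {d α : ℝ} (hα : 0 ≤ α) (hdα : α < d)
    {C : Set G} (hC : IsPreconnected C) (hCband : C ⊆ {y | d - α ≤ dist r y ∧ dist r y ≤ d + α})
    {y z : G} (hy : y ∈ C) (hz : z ∈ C) :
    dist y z ≤ 4 * α * (2 + M.NE (4 * α)) := by
  classical
  let := M.fintypeE
  choose J hJ using M.exists_isSmallPartition_bandParam r hdα
  have hS : ∀ e, M.bandParam r d α e ⊆ Icc 0 (M.len e) := fun _ ↦ inter_subset_left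
  calc dist y z ≤ 4 * α * (2 + (Finset.univ.filter (M.IsFullPiece J)).card) :=
        hC.dist_le_of_gate
          (fun i hi j hji p hp ↦ M.image_param_inter_subset_gate hS hJ
            (by simpa using hi) hji ⟨hp.1.2, hp.2⟩)
          (M.dist_le_of_mem_image_param hS hJ) (M.isClosed_image_param hS hJ)
          (hCband.trans (M.band_subset_iUnion_image_param r hJ)) hy hz
    _ ≤ 4 * α * (2 + M.NE (4 * α)) := by
      gcongr
      exact_mod_cast M.card_filter_isFullPiece_le hJ

end MetricGraphStruct

theorem band_component_diameter_general {G : Type*} [MetricSpace G]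
    (M : MetricGraphStruct G) (r : G) (α : ℝ) (hα : 0 < α) (d : ℝ)
    (x : G) :
    Metric.diam
        (connectedComponentIn {y : G | d - α ≤ dist r y ∧ dist r y ≤ d + α} x) ≤
      4 * (2 + (M.NE (4 * α) : ℝ)) * α := by
  refine diam_le_of_forall_dist_le (by positivity) fun y hy z hz ↦ ?_
  have hCband := connectedComponentIn_subset {y : G | d - α ≤ dist r y ∧ dist r y ≤ d + α} x
  rcases le_or_gt d α with hdα | hdα
  · have hyr : dist y r ≤ d + α := dist_comm r y ▸ (hCband hy).2
    calc dist y z ≤ dist y r + dist r z := dist_triangle y r z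
      _ ≤ 4 * α := by linarith [(hCband hz).2]
      _ ≤ 4 * (2 + (M.NE (4 * α) : ℝ)) * α := by nlinarith [(M.NE (4 * α)).cast_nonneg (α := ℝ)]
  · calc dist y z ≤ 4 * α * (2 + M.NE (4 * α)) :=
          M.dist_le_of_isPreconnected_subset_band r hα.le hdα isPreconnected_connectedComponentIn
            hCband hy hz
      _ = 4 * (2 + (M.NE (4 * α) : ℝ)) * α := by ring

/-- In a connected finite metric graph, any connected component `B` of the band
`B_{d,α} = {x : d - α ≤ d_G(r,x) ≤ d + α}` has diameter at most `4 (2 + N_E(4α)) α`,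
where `N_E(4α)` is the number of edges of length at most `4α`. -/
theorem band_component_diameter {G : Type*} [MetricSpace G] [ConnectedSpace G]
    (M : MetricGraphStruct G) (r : G) (α : ℝ) (hα : 0 < α) (d : ℝ) (hd : 0 < d)
    (x : G) (hx : x ∈ {y : G | d - α ≤ dist r y ∧ dist r y ≤ d + α}) :
    Metric.diam
        (connectedComponentIn {y : G | d - α ≤ dist r y ∧ dist r y ≤ d + α} x) ≤
      4 * (2 + (M.NE (4 * α) : ℝ)) * α :=
  band_component_diameter_general M r α hα d x
end

section
/- Let (X,d_X) be a compact connected geodesic space, r ∈ X, d = d_X(r,·), and let (G,d_G) be the metric Reeb graph of d, assumed to be a finite metric graph, with quotient map π : X → G. Then the map π is 1-Lipschitz: for all x, y ∈ X, d_G(π(x), π(y)) ≤ d_X(x,y). -/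
open Set Metric

/-- A geodesic metric space: any two points are joined by an isometrically embedded
segment. -/
def IsGeodesicSpace (X : Type*) [MetricSpace X] : Prop :=
  ∀ x y : X, ∃ γ : ℝ → X, γ 0 = x ∧ γ (dist x y) = y ∧
    ∀ s ∈ Set.Icc 0 (dist x y), ∀ t ∈ Set.Icc 0 (dist x y), dist (γ s) (γ t) = |s - t|

/-- The Reeb relation of the distance function `d = d_X(r, ·)`: two points are related if
they have the same distance to `r` and lie in the same path-connected component of the
corresponding level set of `d`. -/
def reebRel {X : Type*} [MetricSpace X] (r : X) (x y : X) : Prop :=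
  dist r x = dist r y ∧ JoinedIn {z | dist r z = dist r x} x y

/-- `G` is the metric Reeb graph of the distance function `d = d_X(r, ·)` on `X`:
`π : X → G` is the (continuous, surjective) quotient map of the Reeb relation, `d`
factors as `d_* ∘ π`, and `G` carries a finite metric graph structure whose edges are
parametrized so that `d_*` increases at unit speed along each edge (hence each edge has
length the variation of `d_*` along it), the metric on `G` being the associated
shortest-path metric. -/
structure ReebGraphOf (X : Type*) [MetricSpace X] (r : X)
    (G : Type*) [MetricSpace G] where
  /-- the finite metric graph structure on `G` -/
  graph : MetricGraphStruct G
  /-- the quotient map -/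
  π : X → G
  continuous_π : Continuous π
  surj : Function.Surjective π
  /-- `π` identifies exactly the points equivalent under the Reeb relation -/
  eq_iff : ∀ x y : X, π x = π y ↔ reebRel r x y
  /-- the function induced by `d` on the quotient -/
  dStar : G → ℝ
  dStar_π : ∀ x : X, dStar (π x) = dist r x
  /-- `d_*` increases at unit speed along each (oriented) edge -/
  dStar_param : ∀ e : graph.E, ∀ t ∈ Set.Icc 0 (graph.len e),
    dStar (graph.param e t) = dStar (graph.param e 0) + t

namespace ReebGraphOf

variable {X : Type*} [MetricSpace X] {r : X} {G : Type*} [MetricSpace G]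

/-- A merging vertex: a point of `G` which is the terminal endpoint of at least two
distinct edges (edges being oriented by increasing `d_*`). -/
def IsMergingVertex (R : ReebGraphOf X r G) (v : G) : Prop :=
  ∃ e₁ e₂ : R.graph.E, e₁ ≠ e₂ ∧ R.graph.tgt e₁ = v ∧ R.graph.tgt e₂ = v

/-- `M`: the supremum of the diameters of the fibers of `π`. -/
noncomputable def fiberDiamSup (R : ReebGraphOf X r G) : ℝ := ⨆ p : G, Metric.diam (R.π ⁻¹' {p})

end ReebGraphOf

/-! Near a point `p` of a finite metric graph, every point shares a closed edge with `p`: the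
shortest-path metric dominates the edge-wise 1-Lipschitz function "parameter offset from `p`",
truncated below the parameter gap between `p` and the other edge endpoints. Along an edge `d_G` is
at most the variation of `d_*`, and `d_* ∘ π = d_X(r, ·)` is 1-Lipschitz, so `π` is 1-Lipschitz
near every point; along a geodesic these local bounds add up to the global one. -/

open Filter Topology

theorem dist_le_sub_of_eventually_dist_le {Y : Type*} [PseudoMetricSpace Y] {f : ℝ → Y}
    {a b : ℝ} (hab : a ≤ b)
    (hf : ∀ c ∈ Icc a b, ∀ᶠ t in 𝓝[Icc a b] c, dist (f c) (f t) ≤ dist c t) :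
    dist (f a) (f b) ≤ b - a := by
  have hcont : ContinuousOn f (Icc a b) := fun c hc =>
    tendsto_iff_dist_tendsto_zero.2 <| squeeze_zero' (.of_forall fun _ => dist_nonneg)
      (by filter_upwards [hf c hc] with t ht; rwa [dist_comm (f t), id, dist_comm t])
      (((continuous_id.dist continuous_const).tendsto' c 0 (dist_self c)).mono_left
        nhdsWithin_le_nhds)
  let s : Set ℝ := {t | dist (f a) (f t) ≤ t - a}
  have hclosed : IsClosed (s ∩ Icc a b) := by
    rw [inter_comm]
    have hg : ContinuousOn (fun t => (dist (f a) (f t), t - a)) (Icc a b) :=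
      (continuous_dist.comp_continuousOn (continuousOn_const.prodMk hcont)).prodMk
        (continuousOn_id.sub continuousOn_const)
    exact hg.preimage_isClosed_of_isClosed isClosed_Icc (isClosed_le continuous_fst continuous_snd)
  have hstep : ∀ x ∈ s ∩ Ico a b, s ∈ 𝓝[>] x := by
    rintro x ⟨hxs, hx⟩
    filter_upwards [nhdsWithin_le_of_mem (Icc_mem_nhdsGT_of_mem hx)
      (hf x (Ico_subset_Icc_self hx)), self_mem_nhdsWithin] with t ht (hxt : x < t)
    calc dist (f a) (f t) ≤ dist (f a) (f x) + dist (f x) (f t) := dist_triangle _ _ _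
      _ ≤ (x - a) + (t - x) := by
        rw [Real.dist_eq, abs_sub_comm, abs_of_pos (sub_pos.2 hxt)] at ht
        exact add_le_add hxs ht
      _ = t - a := by ring
  exact hclosed.Icc_subset_of_forall_mem_nhdsWithin (by simp [s]) hstep ⟨hab, le_rfl⟩

theorem IsGeodesicSpace.lipschitzWith_one_of_eventually {X Y : Type*} [MetricSpace X]
    [PseudoMetricSpace Y] (hX : IsGeodesicSpace X) {f : X → Y}
    (hf : ∀ x, ∀ᶠ y in 𝓝 x, dist (f x) (f y) ≤ dist x y) : LipschitzWith 1 f := by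
  refine LipschitzWith.of_dist_le_mul fun x y => ?_
  obtain ⟨γ, hγ0, hγL, hγ⟩ := hX x y
  have hγcont : ContinuousOn γ (Icc 0 (dist x y)) :=
    (LipschitzOnWith.of_dist_le' fun s hs t ht => by
      rw [hγ s hs t ht, one_mul, Real.dist_eq]).continuousOn
  have := dist_le_sub_of_eventually_dist_le (f := f ∘ γ) dist_nonneg fun c hc => by
    filter_upwards [(hγcont c hc).eventually (hf (γ c)), self_mem_nhdsWithin] with t ht htI
    simpa only [Function.comp_apply, hγ c hc t htI, ← Real.dist_eq] using ht
  simpa [hγ0, hγL] using this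

namespace MetricGraphStruct

variable {G : Type*} [MetricSpace G] (M : MetricGraphStruct G)

theorem eq_and_eq_of_param_eq_of_mem_Ioo {e e' : M.E} {u s : ℝ} (hu : u ∈ Ioo 0 (M.len e))
    (hs : s ∈ Icc 0 (M.len e')) (h : M.param e u = M.param e' s) : e = e' ∧ u = s := by
  rcases hs.1.eq_or_lt with rfl | hs₀
  · exact absurd h.symm (M.endpoint_not_interior e' e u hu).1
  rcases hs.2.eq_or_lt with rfl | hs₁
  · exact absurd h.symm (M.endpoint_not_interior e' e u hu).2
  by_cases hee : e = e'
  · subst hee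
    exact ⟨rfl, M.injOn e hu ⟨hs₀, hs₁⟩ h⟩
  · exact absurd h (M.disjoint_interiors e e' hee u hu s ⟨hs₀, hs₁⟩)

def EndpointGap (p : G) (ε : ℝ) : Prop :=
  ∀ e, ∀ w ∈ Icc 0 (M.len e), M.param e w = p → ∀ u, (u = 0 ∨ u = M.len e) → u ≠ w → ε ≤ |u - w|

theorem exists_pos_endpointGap (p : G) : ∃ ε > 0, M.EndpointGap p ε := by
  by_cases hint : ∃ e₁, ∃ w₁ ∈ Ioo 0 (M.len e₁), M.param e₁ w₁ = p
  · obtain ⟨e₁, w₁, hw₁, rfl⟩ := hint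
    refine ⟨min w₁ (M.len e₁ - w₁), lt_min hw₁.1 (sub_pos.2 hw₁.2), ?_⟩
    rintro e w hw hpw u hu -
    obtain ⟨rfl, rfl⟩ := M.eq_and_eq_of_param_eq_of_mem_Ioo hw₁ hw hpw.symm
    rcases hu with rfl | rfl
    · rw [zero_sub, abs_neg, abs_of_pos hw₁.1]
      exact min_le_left _ _
    · rw [abs_of_pos (sub_pos.2 hw₁.2)]
      exact min_le_right _ _
  · have := M.fintypeE
    have : Nonempty M.E := ⟨(M.cover p).choose⟩
    refine ⟨Finset.univ.inf' Finset.univ_nonempty M.len,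
      (Finset.lt_inf'_iff _).2 fun e _ => M.len_pos e, ?_⟩
    rintro e w hw rfl u hu huw
    have hw' : w = 0 ∨ w = M.len e := by
      by_contra! h
      exact hint ⟨e, w, ⟨hw.1.lt_of_ne' h.1, hw.2.lt_of_ne h.2⟩, rfl⟩
    have hlen := M.len_pos e
    have : |u - w| = M.len e := by
      rcases hu with rfl | rfl <;> rcases hw' with rfl | rfl <;>
        simp_all [abs_of_pos hlen]
    exact this ▸ Finset.inf'_le _ (Finset.mem_univ e)

def edgeOffsets (p q : G) : Set ℝ :=
  {v | ∃ e, ∃ w ∈ Icc 0 (M.len e), ∃ u ∈ Icc 0 (M.len e),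
    M.param e w = p ∧ M.param e u = q ∧ |u - w| = v}

noncomputable def truncEdgeDist (p : G) (ε : ℝ) (q : G) : ℝ := sInf (insert ε (M.edgeOffsets p q))

variable {M}

theorem bddBelow_insert_edgeOffsets (p q : G) (ε : ℝ) :
    BddBelow (insert ε (M.edgeOffsets p q)) :=
  .insert ε ⟨0, by rintro _ ⟨e, w, -, u, -, -, -, rfl⟩; exact abs_nonneg _⟩

theorem truncEdgeDist_le_of_mem {p q : G} {ε v : ℝ} (hv : v ∈ insert ε (M.edgeOffsets p q)) :
    M.truncEdgeDist p ε q ≤ v :=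
  csInf_le (bddBelow_insert_edgeOffsets p q ε) hv

theorem truncEdgeDist_nonneg {p q : G} {ε : ℝ} (hε : 0 ≤ ε) : 0 ≤ M.truncEdgeDist p ε q :=
  le_csInf (insert_nonempty _ _) <| by
    rintro v (rfl | ⟨e, w, -, u, -, -, -, rfl⟩)
    exacts [hε, abs_nonneg _]

theorem truncEdgeDist_self (p : G) {ε : ℝ} (hε : 0 ≤ ε) : M.truncEdgeDist p ε p = 0 := by
  obtain ⟨e, t, ht, hp⟩ := M.cover p
  refine le_antisymm (truncEdgeDist_le_of_mem (.inr ⟨e, t, ht, t, ht, hp, hp, ?_⟩))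
    (truncEdgeDist_nonneg hε)
  simp

theorem truncEdgeDist_param_le {p : G} {ε : ℝ} (hsep : M.EndpointGap p ε)
    (e : M.E) {s t : ℝ} (hs : s ∈ Icc 0 (M.len e)) (ht : t ∈ Icc 0 (M.len e)) :
    M.truncEdgeDist p ε (M.param e t) ≤ M.truncEdgeDist p ε (M.param e s) + |s - t| := by
  rw [← sub_le_iff_le_add]
  refine le_csInf (insert_nonempty _ _) ?_
  rintro a (rfl | ⟨e₁, w, hw, u, hu, hpw, hus, rfl⟩) <;> rw [sub_le_iff_le_add]
  · exact (truncEdgeDist_le_of_mem (mem_insert _ _)).trans (le_add_of_nonneg_right (abs_nonneg _))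
  by_cases hsame : e₁ = e ∧ u = s
  · obtain ⟨rfl, rfl⟩ := hsame
    refine (truncEdgeDist_le_of_mem (.inr ⟨e₁, w, hw, t, ht, hpw, rfl, rfl⟩)).trans ?_
    rw [abs_sub_comm u t]
    exact abs_sub_le t u w |>.trans_eq (add_comm _ _)
  -- `(e₁, u)` and `(e, s)` are distinct representations of one point, so `u` is an endpoint.
  have hu' : u = 0 ∨ u = M.len e₁ := by
    by_contra! h
    exact hsame (M.eq_and_eq_of_param_eq_of_mem_Ioo ⟨hu.1.lt_of_ne' h.1, hu.2.lt_of_ne h.2⟩ hs hus)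
  rcases eq_or_ne u w with rfl | huw
  · have hps : M.param e s = p := hus ▸ hpw
    refine (truncEdgeDist_le_of_mem (.inr ⟨e, s, hs, t, ht, hps, rfl, rfl⟩)).trans ?_
    rw [sub_self, abs_zero, zero_add, abs_sub_comm]
  · exact (truncEdgeDist_le_of_mem (mem_insert _ _)).trans
      ((hsep e₁ w hw hpw u hu' huw).trans (le_add_of_nonneg_right (abs_nonneg _)))

theorem eventually_exists_edge (p : G) :
    ∀ᶠ q in 𝓝 p, ∃ e, ∃ w ∈ Icc 0 (M.len e), ∃ u ∈ Icc 0 (M.len e),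
      M.param e w = p ∧ M.param e u = q := by
  obtain ⟨ε, hε, hsep⟩ := M.exists_pos_endpointGap p
  -- `d(p, ·)` dominates the edge-wise 1-Lipschitz function `truncEdgeDist p ε`, which is `< ε`
  -- only at points sharing an edge with `p`.
  have hle : ∀ q, M.truncEdgeDist p ε q ≤ dist p q := by
    intro q
    have := M.dist_maximal (fun q q' => |M.truncEdgeDist p ε q - M.truncEdgeDist p ε q'|)
      (fun _ => by simp) (fun _ _ => abs_sub_comm _ _) (fun _ _ _ => abs_sub_le _ _ _)
      (fun e s hs t ht => abs_sub_le_iff.2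
        ⟨by linarith [truncEdgeDist_param_le hsep e ht hs, abs_sub_comm s t],
          by linarith [truncEdgeDist_param_le hsep e hs ht]⟩) p q
    rwa [truncEdgeDist_self p hε.le, zero_sub, abs_neg,
      abs_of_nonneg (truncEdgeDist_nonneg hε.le)] at this
  filter_upwards [ball_mem_nhds p hε] with q hq
  obtain ⟨v, hv, hvε⟩ := exists_lt_of_csInf_lt (insert_nonempty _ _)
    ((hle q).trans_lt (mem_ball'.1 hq))
  rcases hv with rfl | ⟨e, w, hw, u, hu, hpw, hpu, -⟩
  · exact absurd hvε (lt_irrefl _)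
  · exact ⟨e, w, hw, u, hu, hpw, hpu⟩

end MetricGraphStruct

namespace ReebGraphOf

variable {X : Type*} [MetricSpace X] {r : X} {G : Type*} [MetricSpace G] (R : ReebGraphOf X r G)

theorem dist_param_le_abs_dStar_sub (e : R.graph.E) {w u : ℝ} (hw : w ∈ Icc 0 (R.graph.len e))
    (hu : u ∈ Icc 0 (R.graph.len e)) :
    dist (R.graph.param e w) (R.graph.param e u) ≤
      |R.dStar (R.graph.param e w) - R.dStar (R.graph.param e u)| := by
  rw [R.dStar_param e w hw, R.dStar_param e u hu, add_sub_add_left_eq_sub, ← Real.dist_eq]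
  simpa using (R.graph.param_lipschitz e).dist_le_mul w hw u hu

theorem eventually_dist_le_abs_dStar_sub (p : G) :
    ∀ᶠ q in 𝓝 p, dist p q ≤ |R.dStar p - R.dStar q| := by
  filter_upwards [R.graph.eventually_exists_edge p] with q ⟨e, w, hw, u, hu, hpw, hqu⟩
  subst hpw hqu
  exact R.dist_param_le_abs_dStar_sub e hw hu

theorem eventually_dist_π_le (x : X) : ∀ᶠ y in 𝓝 x, dist (R.π x) (R.π y) ≤ dist x y := by
  filter_upwards [R.continuous_π.continuousAt.eventually
    (R.eventually_dist_le_abs_dStar_sub (R.π x))] with y hy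
  rw [R.dStar_π, R.dStar_π, dist_comm r x, dist_comm r y] at hy
  exact hy.trans (abs_dist_sub_le x y r)

end ReebGraphOf

theorem reeb_quotient_map_one_lipschitz_general {X : Type*} [MetricSpace X]
    (hX : IsGeodesicSpace X) (r : X)
    {G : Type*} [MetricSpace G] (R : ReebGraphOf X r G) :
    ∀ x y : X, dist (R.π x) (R.π y) ≤ dist x y := by
  intro x y
  simpa using (hX.lipschitzWith_one_of_eventually R.eventually_dist_π_le).dist_le_mul x y

/-- The quotient map `π : X → G` onto the metric Reeb graph of `d = d_X(r,·)` is
1-Lipschitz. -/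
theorem reeb_quotient_map_one_lipschitz {X : Type*} [MetricSpace X] [CompactSpace X]
    [ConnectedSpace X] (hX : IsGeodesicSpace X) (r : X)
    {G : Type*} [MetricSpace G] (R : ReebGraphOf X r G) :
    ∀ x y : X, dist (R.π x) (R.π y) ≤ dist x y :=
  reeb_quotient_map_one_lipschitz_general hX r R
end

section
/- Let (X,d_X) be a compact connected geodesic space with Reeb graph (G,d_G) of the distance function d = d_X(r,·) (assumed a finite metric graph), and quotient map π : X → G. If δ is a continuous path in G joining p to p' along which d_* is strictly increasing, then δ is a shortest path in G and d_G(p,p') = d_*(p') − d_*(p). In particular, d_*(p) = d_G(π(r), p) for every p ∈ G. -/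
open Set Metric

/-
Proof idea: `d_*` is 1-Lipschitz on `G`, since it changes at unit speed along edges and `d_G` is the
largest metric making the edge parametrizations 1-Lipschitz. Conversely, as `G` has finitely many
compact edges, every point near `q` lies on an edge through `q`, so locally `d_G` equals the
difference of `d_*` values. A continuous induction along a path on which `d_*` is monotone then gives
`d_G(δ a, δ t) ≤ d_*(δ t) - d_*(δ a)` for all `t`; so the path is an isometric copy of an interval,
and its variation is that of `d_* ∘ δ`. Geodesics from `r` in `X` project to such paths from `π r`.
-/

open Filter Topology

theorem eVariationOn.eq_of_edist_eq {α E F : Type*} [LinearOrder α] [PseudoEMetricSpace E]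
    [PseudoEMetricSpace F] {f : α → E} {g : α → F} {s : Set α}
    (h : ∀ x ∈ s, ∀ y ∈ s, edist (f x) (f y) = edist (g x) (g y)) :
    eVariationOn f s = eVariationOn g s := by
  dsimp only [eVariationOn]
  congr 1 with p : 1
  congr 1 with i : 1
  exact h _ (p.2.2.2 (i + 1)) _ (p.2.2.2 i)

theorem dist_le_sub_of_monotoneOn_comp {G : Type*} [PseudoMetricSpace G] {f : G → ℝ}
    (hfc : Continuous f) (hf : ∀ q, ∀ᶠ q' in 𝓝 q, dist q q' ≤ |f q' - f q|)
    {a b : ℝ} (hab : a ≤ b) {δ : ℝ → G} (hδ : ContinuousOn δ (Icc a b))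
    (hmono : MonotoneOn (f ∘ δ) (Icc a b)) :
    dist (δ a) (δ b) ≤ f (δ b) - f (δ a) := by
  set S : Set ℝ := {t | dist (δ a) (δ t) ≤ f (δ t) - f (δ a)}
  have hS : IsClosed (S ∩ Icc a b) := by
    rw [inter_comm]
    exact ContinuousOn.preimage_isClosed_of_isClosed
      (((continuous_const.dist continuous_id).comp_continuousOn hδ).prodMk
        ((hfc.comp_continuousOn hδ).sub continuousOn_const))
      isClosed_Icc (isClosed_le continuous_fst continuous_snd)
  -- continuous induction: the bound propagates to the right of any point where it holds
  refine hS.Icc_subset_of_forall_mem_nhdsWithin (by simp [S]) ?_ ⟨hab, le_rfl⟩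
  rintro x ⟨hxS, hxa, hxb⟩
  have hIoo : Ioo x b ∈ 𝓝[>] x := Ioo_mem_nhdsGT hxb
  have hδx : Tendsto δ (𝓝[>] x) (𝓝 (δ x)) :=
    (hδ x ⟨hxa, hxb.le⟩).mono_left (nhdsWithin_le_of_mem (mem_of_superset hIoo
      fun t ht => ⟨hxa.trans ht.1.le, ht.2.le⟩))
  filter_upwards [hIoo, hδx.eventually (hf (δ x))] with t ht hdist
  have hle : f (δ x) ≤ f (δ t) :=
    hmono ⟨hxa, hxb.le⟩ ⟨hxa.trans ht.1.le, ht.2.le⟩ ht.1.le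
  calc dist (δ a) (δ t) ≤ dist (δ a) (δ x) + dist (δ x) (δ t) := dist_triangle _ _ _
    _ ≤ (f (δ x) - f (δ a)) + (f (δ t) - f (δ x)) := by
      rw [abs_of_nonneg (sub_nonneg.2 hle)] at hdist
      exact add_le_add hxS hdist
    _ = f (δ t) - f (δ a) := by ring

namespace MetricGraphStruct

variable {G : Type*} [MetricSpace G] (M : MetricGraphStruct G)

def edge (e : M.E) : Set G := M.param e '' Icc 0 (M.len e)

theorem isCompact_edge (e : M.E) : IsCompact (M.edge e) :=
  isCompact_Icc.image_of_continuousOn (M.param_lipschitz e).continuousOn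

theorem eventually_forall_mem_edge_imp (q : G) :
    ∀ᶠ q' in 𝓝 q, ∀ e, q' ∈ M.edge e → q ∈ M.edge e := by
  have := M.fintypeE
  refine eventually_all.2 fun e => ?_
  by_cases hq : q ∈ M.edge e
  · exact Eventually.of_forall fun _ _ => hq
  · filter_upwards [(M.isCompact_edge e).isClosed.isOpen_compl.mem_nhds hq] with q' hq' h
    exact absurd h hq'

end MetricGraphStruct

namespace ReebGraphOf

variable {X : Type*} [MetricSpace X] {r : X} {G : Type*} [MetricSpace G] (R : ReebGraphOf X r G)

theorem abs_dStar_sub_le_dist (p q : G) : |R.dStar p - R.dStar q| ≤ dist p q := by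
  refine R.graph.dist_maximal (fun p q => |R.dStar p - R.dStar q|) (by simp)
    (fun p q => abs_sub_comm _ _) (fun p q s => abs_sub_le _ _ _) ?_ p q
  intro e s hs t ht
  rw [R.dStar_param e s hs, R.dStar_param e t ht, add_sub_add_left_eq_sub]

theorem continuous_dStar : Continuous R.dStar :=
  LipschitzWith.continuous (K := 1) <| .of_dist_le_mul fun p q => by
    simpa [Real.dist_eq] using R.abs_dStar_sub_le_dist p q

theorem dist_param_param (e : R.graph.E) {s t : ℝ} (hs : s ∈ Icc 0 (R.graph.len e))
    (ht : t ∈ Icc 0 (R.graph.len e)) :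
    dist (R.graph.param e s) (R.graph.param e t) = |s - t| := by
  refine le_antisymm ?_ ?_
  · simpa [Real.dist_eq] using (R.graph.param_lipschitz e).dist_le_mul s hs t ht
  · simpa [R.dStar_param e s hs, R.dStar_param e t ht] using
      R.abs_dStar_sub_le_dist (R.graph.param e s) (R.graph.param e t)

theorem eventually_dist_eq_abs_dStar_sub (q : G) :
    ∀ᶠ q' in 𝓝 q, dist q q' = |R.dStar q' - R.dStar q| := by
  filter_upwards [R.graph.eventually_forall_mem_edge_imp q] with q' hq'
  obtain ⟨e, t, ht, rfl⟩ := R.graph.cover q'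
  obtain ⟨s, hs, rfl⟩ := hq' e ⟨t, ht, rfl⟩
  rw [R.dist_param_param e hs ht, R.dStar_param e t ht, R.dStar_param e s hs, abs_sub_comm]
  ring_nf

theorem dist_eq_dStar_sub_of_monotoneOn {a b : ℝ} (hab : a ≤ b) {δ : ℝ → G}
    (hδ : ContinuousOn δ (Icc a b)) (hmono : MonotoneOn (R.dStar ∘ δ) (Icc a b)) :
    dist (δ a) (δ b) = R.dStar (δ b) - R.dStar (δ a) :=
  le_antisymm
    (dist_le_sub_of_monotoneOn_comp R.continuous_dStar
      (fun q => (R.eventually_dist_eq_abs_dStar_sub q).mono fun _ h => h.le) hab hδ hmono)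
    ((le_abs_self _).trans (dist_comm (δ a) (δ b) ▸ R.abs_dStar_sub_le_dist _ _))

theorem eVariationOn_eq_dist_of_monotoneOn {a b : ℝ} (hab : a ≤ b) {δ : ℝ → G}
    (hδ : ContinuousOn δ (Icc a b)) (hmono : MonotoneOn (R.dStar ∘ δ) (Icc a b)) :
    eVariationOn δ (Icc a b) = ENNReal.ofReal (dist (δ a) (δ b)) := by
  have hedist : ∀ s ∈ Icc a b, ∀ t ∈ Icc a b,
      edist (δ s) (δ t) = edist ((R.dStar ∘ δ) s) ((R.dStar ∘ δ) t) := by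
    intro s hs t ht
    wlog hst : s ≤ t generalizing s t
    · rw [edist_comm, this t ht s hs (le_of_not_ge hst), edist_comm]
    have hsub : Icc s t ⊆ Icc a b := Icc_subset_Icc hs.1 ht.2
    rw [edist_dist, edist_dist, R.dist_eq_dStar_sub_of_monotoneOn hst (hδ.mono hsub)
      (hmono.mono hsub), Real.dist_eq, abs_sub_comm,
      abs_of_nonneg (sub_nonneg.2 (hmono hs ht hst))]
    rfl
  rw [eVariationOn.eq_of_edist_eq hedist, ← inter_self (Icc a b),
    hmono.eVariationOn_eq ⟨le_rfl, hab⟩ ⟨hab, le_rfl⟩, R.dist_eq_dStar_sub_of_monotoneOn hab hδ hmono]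
  rfl

theorem dStar_eq_dist_π (hX : IsGeodesicSpace X) (q : G) : R.dStar q = dist (R.π r) q := by
  obtain ⟨x, rfl⟩ := R.surj q
  obtain ⟨γ, hγ0, hγx, hγ⟩ := hX r x
  have hD : (0 : ℝ) ∈ Icc 0 (dist r x) := ⟨le_rfl, dist_nonneg⟩
  have hdγ : ∀ t ∈ Icc 0 (dist r x), R.dStar (R.π (γ t)) = t := fun t ht => by
    rw [R.dStar_π, ← hγ0, hγ 0 hD t ht, zero_sub, abs_neg, abs_of_nonneg ht.1]
  have hγc : ContinuousOn γ (Icc 0 (dist r x)) :=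
    LipschitzOnWith.continuousOn (K := 1) <| .of_dist_le_mul fun s hs t ht => by
      simp [hγ s hs t ht, Real.dist_eq]
  have hmono : MonotoneOn (R.dStar ∘ R.π ∘ γ) (Icc 0 (dist r x)) := fun s hs t ht hst => by
    simpa only [Function.comp_apply, hdγ s hs, hdγ t ht] using hst
  have := R.dist_eq_dStar_sub_of_monotoneOn hD.2 (R.continuous_π.comp_continuousOn hγc) hmono
  simp only [Function.comp_apply, hγ0, hγx, R.dStar_π, dist_self, sub_zero] at this
  rw [R.dStar_π, this]

end ReebGraphOf

theorem dStar_increasing_path_is_shortest_general {X : Type*} [MetricSpace X]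
    (hX : IsGeodesicSpace X) (r : X)
    {G : Type*} [MetricSpace G] (R : ReebGraphOf X r G)
    (a b : ℝ) (hab : a ≤ b) (δ : ℝ → G) (hδc : ContinuousOn δ (Set.Icc a b))
    (hmono : StrictMonoOn (R.dStar ∘ δ) (Set.Icc a b))
    (p p' : G) (hp : δ a = p) (hp' : δ b = p') :
    (dist p p' = R.dStar p' - R.dStar p ∧
      eVariationOn δ (Set.Icc a b) = ENNReal.ofReal (dist p p')) ∧
    ∀ q : G, R.dStar q = dist (R.π r) q := by
  subst hp hp'
  exact ⟨⟨R.dist_eq_dStar_sub_of_monotoneOn hab hδc hmono.monotoneOn,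
    R.eVariationOn_eq_dist_of_monotoneOn hab hδc hmono.monotoneOn⟩, R.dStar_eq_dist_π hX⟩

/-- In the metric Reeb graph `G` of `d = d_X(r,·)`, a continuous path along which `d_*`
is strictly increasing is a shortest path: its length (total variation) equals the
distance between its endpoints, which is `d_*(p') - d_*(p)`. In particular
`d_*(p) = d_G(π r, p)` for every `p ∈ G`. -/
theorem dStar_increasing_path_is_shortest {X : Type*} [MetricSpace X] [CompactSpace X]
    [ConnectedSpace X] (hX : IsGeodesicSpace X) (r : X)
    {G : Type*} [MetricSpace G] (R : ReebGraphOf X r G)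
    (a b : ℝ) (hab : a ≤ b) (δ : ℝ → G) (hδc : ContinuousOn δ (Set.Icc a b))
    (hmono : StrictMonoOn (R.dStar ∘ δ) (Set.Icc a b))
    (p p' : G) (hp : δ a = p) (hp' : δ b = p') :
    (dist p p' = R.dStar p' - R.dStar p ∧
      eVariationOn δ (Set.Icc a b) = ENNReal.ofReal (dist p p')) ∧
    ∀ q : G, R.dStar q = dist (R.π r) q :=
  dStar_increasing_path_is_shortest_general hX r R a b hab δ hδc hmono p p' hp hp'
end

section
/- Let (X,d_X) be a compact connected geodesic space with finite metric Reeb graph (G,d_G) of the distance function d = d_X(r,·), and quotient map π : X → G. Then for all x, y ∈ X, d_X(x,y) ≤ d_G(π(x),π(y)) + 2(β_1(G)+1)·M, where β_1(G) is the first Betti number of G and M = sup_{p∈G} diam(π^{-1}(p)) is the supremum of diameters of fibers of π. -/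
open Set Metric

/-!
Join `π x` to `π y` by a chain of edge segments whose total length is within `ε` of
`d_G(π x, π y)` (the metric of `G` is the largest one making the edges 1-Lipschitz), and
shorten it until it neither continues a segment along the same edge nor visits a point twice.
The chain is then followed in `X`. Along a descending segment, a geodesic from `r` to the current
point, run backwards, stays above the segment, so descending by `h` in `G` costs `h` in `X`; a
run of ascending segments is covered the same way from its top end. This breaks down only where
the geodesic may arrive along another edge, i.e. at merging vertices, and there one jumps inside
a fiber at cost at most `M`. The other jumps happen at the bottoms of ascending runs, each
charged to the merging vertex at the top of the run. As the chain visits each of the at most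
`β₁(G)` merging vertices once, there are at most `2 β₁(G) + 1` jumps.
-/

open Set Metric Filter Topology

lemma List.exists_eq_append_forall_and_not_head {α : Type*} (P : α → Prop) (L : List α) :
    ∃ A B, L = A ++ B ∧ (∀ a ∈ A, P a) ∧ ∀ b B', B = b :: B' → ¬P b := by
  classical
  refine ⟨L.takeWhile (P ·), L.dropWhile (P ·), List.takeWhile_append_dropWhile.symm,
    fun a ha => by simpa using List.mem_takeWhile_imp ha, fun b B' hB => ?_⟩
  simpa [hB] using List.head_dropWhile_not (P ·) (l := L) (by simp [hB])

lemma IsGeodesicSpace.exists_ray {X : Type*} [MetricSpace X] (hX : IsGeodesicSpace X) (r z : X) :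
    ∃ γ : ℝ → X, γ (dist r z) = z ∧ ContinuousOn γ (Icc 0 (dist r z)) ∧
      ∀ u ∈ Icc 0 (dist r z), dist r (γ u) = u ∧ dist (γ u) z = dist r z - u := by
  obtain ⟨γ, hγr, hγz, hγ⟩ := hX r z
  have hz : dist r z ∈ Icc 0 (dist r z) := ⟨dist_nonneg, le_rfl⟩
  refine ⟨γ, hγz, ?_, fun u hu => ⟨?_, ?_⟩⟩
  · exact (LipschitzOnWith.of_dist_le_mul (K := 1) fun s hs t ht => by
      simp [hγ s hs t ht, Real.dist_eq]).continuousOn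
  · rw [← hγr, hγ 0 ⟨le_rfl, dist_nonneg⟩ u hu, zero_sub, abs_neg, abs_of_nonneg hu.1]
  · have h := hγ u hu _ hz
    rw [hγz] at h
    rw [h, abs_of_nonpos (by linarith [hu.2])]
    ring

lemma Finset.card_add_card_image_le {α β : Type*} [Fintype α] [DecidableEq β] (f : α → β)
    (S : Finset β) (hS : ∀ b ∈ S, ∃ a₁ a₂, a₁ ≠ a₂ ∧ f a₁ = b ∧ f a₂ = b) :
    S.card + (Finset.univ.image f).card ≤ Fintype.card α := by
  classical
  set T := Finset.univ.image f
  let fiber : β → ℕ := fun b => (Finset.univ.filter fun a => f a = b).card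
  have hST : S ⊆ T := fun b hb => by
    obtain ⟨a, -, -, ha, -⟩ := hS b hb
    exact Finset.mem_image.2 ⟨a, Finset.mem_univ _, ha⟩
  have h₁ : ∀ b ∈ T \ S, 1 ≤ fiber b := fun b hb => by
    obtain ⟨a, -, ha⟩ := Finset.mem_image.1 (Finset.mem_sdiff.1 hb).1
    exact Finset.card_pos.2 ⟨a, by simp [ha]⟩
  have h₂ : ∀ b ∈ S, 2 ≤ fiber b := fun b hb => by
    obtain ⟨a₁, a₂, hne, ha₁, ha₂⟩ := hS b hb
    rw [← Finset.card_pair hne]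
    exact Finset.card_le_card fun a => by simp only [Finset.mem_insert, Finset.mem_singleton,
      Finset.mem_filter, Finset.mem_univ, true_and]; rintro (rfl | rfl) <;> assumption
  calc S.card + T.card = (T \ S).card • 1 + S.card • 2 := by
        rw [← Finset.card_sdiff_add_card_eq_card hST, smul_eq_mul, smul_eq_mul]; ring
    _ ≤ ∑ b ∈ T \ S, fiber b + ∑ b ∈ S, fiber b :=
        add_le_add (Finset.card_nsmul_le_sum _ _ _ h₁) (Finset.card_nsmul_le_sum _ _ _ h₂)
    _ = ∑ b ∈ T, fiber b := Finset.sum_sdiff hST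
    _ = Fintype.card α := (Finset.card_eq_sum_card_fiberwise fun a _ =>
        Finset.mem_image_of_mem f (Finset.mem_univ a)).symm

namespace MetricGraphStruct

attribute [local instance] fintypeE

variable {G : Type*} [MetricSpace G] (Γ : MetricGraphStruct G)

def edgeImage (e : Γ.E) : Set G := Γ.param e '' Icc 0 (Γ.len e)

def otherEdges (e : Γ.E) : Set G := ⋃ e' ∈ ({e}ᶜ : Set Γ.E), Γ.edgeImage e'

lemma isCompact_edgeImage (e : Γ.E) : IsCompact (Γ.edgeImage e) :=
  isCompact_Icc.image_of_continuousOn (Γ.param_lipschitz e).continuousOn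

lemma isClosed_otherEdges (e : Γ.E) : IsClosed (Γ.otherEdges e) :=
  (toFinite _).isClosed_biUnion fun e' _ => (Γ.isCompact_edgeImage e').isClosed

lemma compactSpace (Γ : MetricGraphStruct G) : CompactSpace G := by
  refine ⟨?_⟩
  have huniv : (univ : Set G) = ⋃ e, Γ.edgeImage e := by
    refine (eq_univ_of_forall fun q => ?_).symm
    obtain ⟨e, t, ht, rfl⟩ := Γ.cover q
    exact mem_iUnion.2 ⟨e, t, ht, rfl⟩
  rw [huniv]
  exact isCompact_iUnion Γ.isCompact_edgeImage

lemma eq_of_param_eq_of_mem_Ioo {e e' : Γ.E} {t t' : ℝ} (ht : t ∈ Ioo 0 (Γ.len e))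
    (ht' : t' ∈ Icc 0 (Γ.len e')) (h : Γ.param e' t' = Γ.param e t) : e' = e ∧ t' = t := by
  rcases ht'.1.eq_or_lt with rfl | h0
  · exact absurd h (Γ.endpoint_not_interior e' e t ht).1
  rcases ht'.2.eq_or_lt with rfl | h1
  · exact absurd h (Γ.endpoint_not_interior e' e t ht).2
  by_cases he : e' = e
  · subst he
    exact ⟨rfl, Γ.injOn e' ⟨h0, h1⟩ ht h⟩
  · exact absurd h (Γ.disjoint_interiors e' e he t' ⟨h0, h1⟩ t ht)

lemma param_not_mem_otherEdges {e : Γ.E} {t : ℝ} (ht : t ∈ Ioo 0 (Γ.len e)) :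
    Γ.param e t ∉ Γ.otherEdges e := by
  simp only [otherEdges, mem_iUnion₂, not_exists]
  rintro e' he' ⟨t', ht', h⟩
  exact he' (Γ.eq_of_param_eq_of_mem_Ioo ht ht' h).1

lemma ne_param_of_mem_vertexSet {v : G} (hv : v ∈ Γ.vertexSet) {e : Γ.E} {t : ℝ}
    (ht : t ∈ Ioo 0 (Γ.len e)) : v ≠ Γ.param e t := by
  obtain ⟨e₀, rfl | rfl⟩ := hv
  exacts [(Γ.endpoint_not_interior e₀ e t ht).1, (Γ.endpoint_not_interior e₀ e t ht).2]

lemma not_mem_edgeImage_or_eq_src {v : G} (hv : v ∈ Γ.vertexSet) {e : Γ.E}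
    (he : Γ.tgt e ≠ v) :
    v ∉ Γ.edgeImage e ∨ v = Γ.src e := by
  refine or_iff_not_imp_left.2 fun hmem => ?_
  obtain ⟨t, ht, rfl⟩ := not_not.1 hmem
  rcases ht.1.eq_or_lt with rfl | h0
  · rfl
  rcases ht.2.eq_or_lt with rfl | h1
  · exact absurd rfl he
  exact absurd rfl (Γ.ne_param_of_mem_vertexSet hv ⟨h0, h1⟩)

structure Segment where
  edge : Γ.E
  start : ℝ
  finish : ℝ
  start_mem : start ∈ Icc 0 (Γ.len edge)
  finish_mem : finish ∈ Icc 0 (Γ.len edge)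

namespace Segment

variable {Γ}

def src (σ : Γ.Segment) : G := Γ.param σ.edge σ.start

def tgt (σ : Γ.Segment) : G := Γ.param σ.edge σ.finish

def cost (σ : Γ.Segment) : ℝ := |σ.start - σ.finish|

def reverse (σ : Γ.Segment) : Γ.Segment :=
  ⟨σ.edge, σ.finish, σ.start, σ.finish_mem, σ.start_mem⟩

@[simp] lemma src_reverse (σ : Γ.Segment) : σ.reverse.src = σ.tgt := rfl

@[simp] lemma tgt_reverse (σ : Γ.Segment) : σ.reverse.tgt = σ.src := rfl

@[simp] lemma cost_reverse (σ : Γ.Segment) : σ.reverse.cost = σ.cost := abs_sub_comm _ _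

lemma cost_nonneg (σ : Γ.Segment) : 0 ≤ σ.cost := abs_nonneg _

end Segment

def IsChain : G → List Γ.Segment → G → Prop
  | p, [], q => p = q
  | p, σ :: L, q => σ.src = p ∧ IsChain σ.tgt L q

def cost (L : List Γ.Segment) : ℝ := (L.map Segment.cost).sum

variable {Γ}

@[simp] lemma isChain_nil {p q : G} : Γ.IsChain p [] q ↔ p = q := Iff.rfl

@[simp] lemma isChain_cons {p q : G} {σ : Γ.Segment} {L : List Γ.Segment} :
    Γ.IsChain p (σ :: L) q ↔ σ.src = p ∧ Γ.IsChain σ.tgt L q := Iff.rfl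

lemma isChain_append {p q : G} {A B : List Γ.Segment} :
    Γ.IsChain p (A ++ B) q ↔ ∃ m, Γ.IsChain p A m ∧ Γ.IsChain m B q := by
  induction A generalizing p with
  | nil => simp
  | cons σ A ih => simp [ih, and_assoc]

lemma IsChain.right_unique {p q q' : G} {L : List Γ.Segment} (h : Γ.IsChain p L q)
    (h' : Γ.IsChain p L q') : q = q' := by
  induction L generalizing p with
  | nil => exact h.symm.trans h'
  | cons σ L ih => exact ih h.2 h'.2

lemma IsChain.reverse {p q : G} {L : List Γ.Segment} (h : Γ.IsChain p L q) :
    Γ.IsChain q (L.map Segment.reverse).reverse p := by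
  induction L generalizing p with
  | nil => exact h.symm
  | cons σ L ih =>
    simp only [List.map_cons, List.reverse_cons, isChain_append]
    exact ⟨σ.tgt, ih h.2, by simpa using h.1⟩

@[simp] lemma cost_nil : Γ.cost [] = 0 := rfl

@[simp] lemma cost_cons (σ : Γ.Segment) (L : List Γ.Segment) :
    Γ.cost (σ :: L) = σ.cost + Γ.cost L := List.sum_cons

@[simp] lemma cost_append (A B : List Γ.Segment) : Γ.cost (A ++ B) = Γ.cost A + Γ.cost B := by
  simp [cost]

@[simp] lemma cost_reverse (L : List Γ.Segment) :
    Γ.cost (L.map Segment.reverse).reverse = Γ.cost L := by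
  simp [cost, Function.comp_def]

lemma cost_nonneg (L : List Γ.Segment) : 0 ≤ Γ.cost L :=
  List.sum_nonneg (by simpa using fun σ _ => σ.cost_nonneg)

variable (Γ)

def chainCosts (p q : G) : Set ℝ := {c | ∃ L, Γ.IsChain p L q ∧ Γ.cost L = c}

lemma chainCosts_comm (p q : G) : Γ.chainCosts p q = Γ.chainCosts q p := by
  have h : ∀ p q, Γ.chainCosts p q ⊆ Γ.chainCosts q p := by
    rintro p q _ ⟨L, hL, rfl⟩
    exact ⟨_, hL.reverse, cost_reverse L⟩
  exact (h p q).antisymm (h q p)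

/-- The cap `D` makes the distance finite and subadditive even between points that no chain
joins. -/
noncomputable def cappedChainDist (D : ℝ) (p q : G) : ℝ := sInf (insert D (Γ.chainCosts p q))

variable {Γ} {D : ℝ} {p q : G}

lemma nonneg_of_mem_insert_chainCosts (hD : 0 ≤ D) {c : ℝ}
    (hc : c ∈ insert D (Γ.chainCosts p q)) : 0 ≤ c := by
  rcases hc with rfl | ⟨L, -, rfl⟩
  exacts [hD, cost_nonneg L]

lemma bddBelow_insert_chainCosts (hD : 0 ≤ D) : BddBelow (insert D (Γ.chainCosts p q)) :=
  ⟨0, fun _ => nonneg_of_mem_insert_chainCosts hD⟩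

lemma cappedChainDist_nonneg (hD : 0 ≤ D) : 0 ≤ Γ.cappedChainDist D p q :=
  le_csInf (insert_nonempty _ _) fun _ => nonneg_of_mem_insert_chainCosts hD

lemma cappedChainDist_le_cap (hD : 0 ≤ D) : Γ.cappedChainDist D p q ≤ D :=
  csInf_le (bddBelow_insert_chainCosts hD) (mem_insert _ _)

lemma IsChain.cappedChainDist_le (hD : 0 ≤ D) {L : List Γ.Segment} (hL : Γ.IsChain p L q) :
    Γ.cappedChainDist D p q ≤ Γ.cost L :=
  csInf_le (bddBelow_insert_chainCosts hD) (mem_insert_of_mem _ ⟨L, hL, rfl⟩)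

lemma cappedChainDist_self (hD : 0 ≤ D) : Γ.cappedChainDist D p p = 0 :=
  (IsChain.cappedChainDist_le hD (L := []) rfl).antisymm (cappedChainDist_nonneg hD)

lemma cappedChainDist_comm : Γ.cappedChainDist D p q = Γ.cappedChainDist D q p := by
  rw [cappedChainDist, chainCosts_comm, cappedChainDist]

lemma cappedChainDist_triangle (hD : 0 ≤ D) (s : G) :
    Γ.cappedChainDist D p s ≤ Γ.cappedChainDist D p q + Γ.cappedChainDist D q s := by
  simp only [cappedChainDist]
  rw [← csInf_add (insert_nonempty _ _)
    (bddBelow_insert_chainCosts hD) (insert_nonempty _ _) (bddBelow_insert_chainCosts hD)]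
  refine le_csInf ((insert_nonempty _ _).add (insert_nonempty _ _)) ?_
  rintro _ ⟨a, ha, b, hb, rfl⟩
  have hcap : sInf (insert D (Γ.chainCosts p s)) ≤ D := cappedChainDist_le_cap hD
  rcases ha with rfl | ⟨L₁, hL₁, rfl⟩
  · linarith [nonneg_of_mem_insert_chainCosts hD hb]
  rcases hb with rfl | ⟨L₂, hL₂, rfl⟩
  · linarith [cost_nonneg L₁]
  simpa [cappedChainDist] using (isChain_append.2 ⟨q, hL₁, hL₂⟩).cappedChainDist_le hD

variable (Γ) in
lemma exists_isChain_cost_lt (p q : G) {ε : ℝ} (hε : 0 < ε) :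
    ∃ L, Γ.IsChain p L q ∧ Γ.cost L < dist p q + ε := by
  have := Γ.compactSpace
  set D := diam (univ : Set G) + 1
  have hD : 0 ≤ D := by positivity
  have hmax := Γ.dist_maximal (Γ.cappedChainDist D) (fun _ => cappedChainDist_self hD)
    (fun _ _ => cappedChainDist_comm) (fun _ _ s => cappedChainDist_triangle hD s)
    (fun e s hs t ht => (IsChain.cappedChainDist_le hD (L := [⟨e, s, t, hs, ht⟩])
      ⟨rfl, rfl⟩).trans_eq (by simp [Segment.cost])) p q
  have hdiam := dist_le_diam_of_mem isCompact_univ.isBounded (mem_univ p) (mem_univ q)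
  have hlt : Γ.cappedChainDist D p q < min (dist p q + ε) D := lt_min (by linarith) (by linarith)
  obtain ⟨c, hc, hcD⟩ := exists_lt_of_csInf_lt (insert_nonempty _ _) hlt
  rcases hc with rfl | ⟨L, hL, rfl⟩
  · exact absurd (hcD.trans_le (min_le_right _ _)) (lt_irrefl _)
  · exact ⟨L, hL, hcD.trans_le (min_le_left _ _)⟩

variable (Γ)

def IsReduced (p : G) (L : List Γ.Segment) (q : G) : Prop :=
  Γ.IsChain p L q ∧
    ∀ L', Γ.IsChain p L' q → Γ.cost L' ≤ Γ.cost L → L.length ≤ L'.length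

variable {Γ}

lemma exists_isReduced {p q : G} {L₀ : List Γ.Segment} (h : Γ.IsChain p L₀ q) :
    ∃ L, Γ.IsReduced p L q ∧ Γ.cost L ≤ Γ.cost L₀ := by
  classical
  have hex : ∃ n, ∃ L, Γ.IsChain p L q ∧ Γ.cost L ≤ Γ.cost L₀ ∧ L.length = n :=
    ⟨_, L₀, h, le_rfl, rfl⟩
  obtain ⟨L, hL, hcost, hlen⟩ := Nat.find_spec hex
  refine ⟨L, ⟨hL, fun L' hL' hc => ?_⟩, hcost⟩
  exact hlen ▸ Nat.find_min' hex ⟨L', hL', hc.trans hcost, rfl⟩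

namespace IsReduced

variable {p q m : G} {σ τ : Γ.Segment} {A B L : List Γ.Segment}

lemma right (h : Γ.IsReduced p (A ++ B) q) (hA : Γ.IsChain p A m) : Γ.IsReduced m B q := by
  obtain ⟨m', hA', hB⟩ := isChain_append.1 h.1
  obtain rfl := hA'.right_unique hA
  refine ⟨hB, fun L' hL' hc => ?_⟩
  have := h.2 (A ++ L') (isChain_append.2 ⟨m', hA, hL'⟩) (by simpa using hc)
  simpa using this

lemma tail (h : Γ.IsReduced p (σ :: L) q) : Γ.IsReduced σ.tgt L q :=
  right (A := [σ]) h ⟨h.1.1, rfl⟩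

lemma src_not_mem_map_tgt (h : Γ.IsReduced p L q) : p ∉ L.map Segment.tgt := by
  intro hp
  obtain ⟨σ, hσ, rfl⟩ := List.mem_map.1 hp
  obtain ⟨A, B, rfl⟩ := List.append_of_mem hσ
  obtain ⟨m, -, hσB⟩ := isChain_append.1 h.1
  have hshort := h.2 B hσB.2 (by
    simp only [cost_append, cost_cons]
    linarith [cost_nonneg A, σ.cost_nonneg])
  simp only [List.length_append, List.length_cons] at hshort
  omega

lemma nodup (h : Γ.IsReduced p L q) : (p :: L.map Segment.tgt).Nodup := by
  induction L generalizing p with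
  | nil => exact List.nodup_singleton p
  | cons σ L ih => exact List.nodup_cons.2 ⟨h.src_not_mem_map_tgt, ih h.tail⟩

lemma start_ne_finish (h : Γ.IsReduced p (σ :: L) q) : σ.start ≠ σ.finish := by
  intro hσ
  apply h.src_not_mem_map_tgt
  rw [← h.1.1]
  simp [Segment.src, Segment.tgt, hσ]

/-- Otherwise the two segments merge into one of no greater cost. -/
lemma not_continues (h : Γ.IsReduced p (σ :: τ :: L) q) :
    ¬(σ.edge = τ.edge ∧ σ.finish = τ.start) := by
  rintro ⟨he, hst⟩
  let μ : Γ.Segment := ⟨σ.edge, σ.start, τ.finish, σ.start_mem, he ▸ τ.finish_mem⟩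
  have hμ : μ.tgt = τ.tgt := by simp only [μ, Segment.tgt, he]
  have hcost : μ.cost ≤ σ.cost + τ.cost := by
    simpa [μ, Segment.cost, hst] using abs_sub_le σ.start τ.start τ.finish
  have hshort := h.2 (μ :: L) ⟨h.1.1, hμ ▸ h.1.2.2⟩ (by simp only [cost_cons]; linarith)
  simp only [List.length_cons] at hshort
  omega

end IsReduced

end MetricGraphStruct
namespace ReebGraphOf

attribute [local instance] MetricGraphStruct.fintypeE

open MetricGraphStruct

variable {X : Type*} [MetricSpace X] {r : X} {G : Type*} [MetricSpace G] (R : ReebGraphOf X r G)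

lemma dStar_nonneg (q : G) : 0 ≤ R.dStar q := by
  obtain ⟨x, rfl⟩ := R.surj q
  exact R.dStar_π x ▸ dist_nonneg

lemma dStar_src_le_of_mem_edgeImage {e : R.graph.E} {q : G} (hq : q ∈ R.graph.edgeImage e) :
    R.dStar (R.graph.src e) ≤ R.dStar q := by
  obtain ⟨t, ht, rfl⟩ := hq
  rw [R.dStar_param e t ht]
  exact le_add_of_nonneg_right ht.1

lemma eq_π_of_dStar_eq_zero {q : G} (hq : R.dStar q = 0) : q = R.π r := by
  obtain ⟨x, rfl⟩ := R.surj q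
  rw [R.dStar_π, dist_eq_zero] at hq
  exact congrArg R.π hq.symm

lemma eq_param_of_not_mem_otherEdges {e : R.graph.E} {q : G} (hq : q ∉ R.graph.otherEdges e) :
    q = R.graph.param e (R.dStar q - R.dStar (R.graph.src e)) := by
  obtain ⟨e', t, ht, rfl⟩ := R.graph.cover q
  obtain rfl : e' = e := by
    by_contra he
    exact hq (mem_biUnion (x := e') he ⟨t, ht, rfl⟩)
  rw [R.dStar_param e' t ht, src, add_sub_cancel_left]

lemma dist_le_fiberDiamSup [CompactSpace X] {a b : X} (h : R.π a = R.π b) :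
    dist a b ≤ R.fiberDiamSup := by
  have hbdd : BddAbove (range fun q : G => diam (R.π ⁻¹' {q})) :=
    ⟨diam (univ : Set X), forall_mem_range.2 fun _ =>
      diam_mono (subset_univ _) isCompact_univ.isBounded⟩
  calc dist a b ≤ diam (R.π ⁻¹' {R.π b}) :=
        dist_le_diam_of_mem (isCompact_univ.isBounded.subset (subset_univ _)) h rfl
    _ ≤ R.fiberDiamSup := le_ciSup hbdd (R.π b)

lemma fiberDiamSup_nonneg : 0 ≤ R.fiberDiamSup :=
  Real.iSup_nonneg fun _ => diam_nonneg

lemma exists_dStar_ray (hX : IsGeodesicSpace X) (z : X) :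
    ∃ γ : ℝ → X, γ (dist r z) = z ∧ ContinuousOn (R.π ∘ γ) (Icc 0 (dist r z)) ∧
      ∀ u ∈ Icc 0 (dist r z), R.dStar (R.π (γ u)) = u ∧ dist (γ u) z = dist r z - u := by
  obtain ⟨γ, hγz, hγc, hγ⟩ := hX.exists_ray r z
  exact ⟨γ, hγz, R.continuous_π.comp_continuousOn hγc,
    fun u hu => ⟨(R.dStar_π _).trans (hγ u hu).1, (hγ u hu).2⟩⟩

lemma eventually_not_mem_edgeImage {f : ℝ → G} {H : ℝ} (hH : 0 < H)
    (hf : ContinuousOn f (Icc 0 H)) (hfd : ∀ u ∈ Icc 0 H, R.dStar (f u) = u) {e : R.graph.E}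
    (he : f H ∉ R.graph.edgeImage e ∨ f H = R.graph.src e) :
    ∀ᶠ u in 𝓝[<] H, f u ∉ R.graph.edgeImage e := by
  have hIcc : Icc 0 H ∈ 𝓝[<] H := Icc_mem_nhdsLT hH
  rcases he with he | he
  · exact ((hf H ⟨hH.le, le_rfl⟩).mono_of_mem_nhdsWithin hIcc).eventually
      ((R.graph.isCompact_edgeImage e).isClosed.isOpen_compl.eventually_mem he)
  · filter_upwards [hIcc, self_mem_nhdsWithin] with u hu (hu' : u < H) hmem
    have := R.dStar_src_le_of_mem_edgeImage hmem
    rw [← he, hfd H ⟨hH.le, le_rfl⟩, hfd u hu] at this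
    linarith

lemma eqOn_param_of_dStar_eq {f : ℝ → G} {e : R.graph.E} {t : ℝ}
    (ht : t ∈ Ioc 0 (R.graph.len e))
    (hf : ContinuousOn f (Icc (R.dStar (R.graph.src e)) (R.dStar (R.graph.src e) + t)))
    (hfd : ∀ u ∈ Icc (R.dStar (R.graph.src e)) (R.dStar (R.graph.src e) + t),
      R.dStar (f u) = u)
    (hend : ∀ᶠ u in 𝓝[<] (R.dStar (R.graph.src e) + t), f u ∉ R.graph.otherEdges e) :
    EqOn f (fun u => R.graph.param e (u - R.dStar (R.graph.src e)))
      (Icc (R.dStar (R.graph.src e)) (R.dStar (R.graph.src e) + t)) := by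
  set c := R.dStar (R.graph.src e)
  set g : ℝ → G := fun u => R.graph.param e (u - c)
  have hct : c < c + t := lt_add_of_pos_right c ht.1
  have hg : ContinuousOn g (Icc c (c + t)) :=
    (R.graph.param_lipschitz e).continuousOn.comp (continuousOn_id.sub continuousOn_const)
      fun u hu => ⟨sub_nonneg.2 hu.1, by linarith [hu.2, ht.2]⟩
  -- where `f` avoids the other edges it agrees with `g`; so this set is open and closed
  have hiff : ∀ u ∈ Ioo c (c + t), f u ∉ R.graph.otherEdges e ↔ f u = g u := fun u hu =>
    ⟨fun h => (R.eq_param_of_not_mem_otherEdges h).trans (by rw [hfd u (Ioo_subset_Icc_self hu)]),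
      fun h => h ▸ R.graph.param_not_mem_otherEdges
        ⟨sub_pos.2 hu.1, by linarith [hu.2, ht.2]⟩⟩
  have hIoo : EqOn f g (Ioo c (c + t)) := by
    have := Subtype.preconnectedSpace (isPreconnected_Ioo (a := c) (b := c + t))
    let S : Set (Ioo c (c + t)) := {u | f u ∉ R.graph.otherEdges e}
    have hfc := (hf.mono Ioo_subset_Icc_self).domRestrict
    have hclopen : IsClopen S := by
      refine ⟨?_, (R.graph.isClosed_otherEdges e).isOpen_compl.preimage hfc⟩
      rw [show S = {u : Ioo c (c + t) | f u = g u} from Set.ext fun u => hiff u u.2]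
      exact isClosed_eq hfc (hg.mono Ioo_subset_Icc_self).domRestrict
    obtain ⟨u, hu, hu'⟩ := (hend.and (Ioo_mem_nhdsLT hct)).exists
    intro v hv
    have hS : S = univ := hclopen.eq_univ ⟨⟨u, hu'⟩, hu⟩
    have hv' : (⟨v, hv⟩ : Ioo c (c + t)) ∈ S := hS ▸ mem_univ _
    exact (hiff v hv).1 hv'
  exact hIoo.of_subset_closure hf hg Ioo_subset_Icc_self (closure_Ioo hct.ne).ge

lemma exists_descent (hX : IsGeodesicSpace X) {e : R.graph.E} {t : ℝ}
    (ht : t ∈ Ioc 0 (R.graph.len e)) {z : X} (hz : R.π z = R.graph.param e t)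
    (havoid : ∀ e' ≠ e, R.π z ∉ R.graph.edgeImage e' ∨ R.π z = R.graph.src e') :
    ∀ s ∈ Icc 0 t, ∃ z', R.π z' = R.graph.param e s ∧ dist z z' = t - s := by
  obtain ⟨γ, hγz, hf, hγ⟩ := R.exists_dStar_ray hX z
  set c := R.dStar (R.graph.src e)
  have hrz : dist r z = c + t := by
    rw [← R.dStar_π, hz, R.dStar_param e t (Ioc_subset_Icc_self ht)]
    rfl
  rw [hrz] at hγz hf hγ
  have hc : 0 ≤ c := R.dStar_nonneg _
  have hend : ∀ᶠ u in 𝓝[<] (c + t), R.π (γ u) ∉ R.graph.otherEdges e := by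
    have hall : ∀ e', ∀ᶠ u in 𝓝[<] (c + t),
        e' ≠ e → R.π (γ u) ∉ R.graph.edgeImage e' := by
      intro e'
      by_cases he' : e' = e
      · exact Eventually.of_forall fun _ h => absurd he' h
      refine (R.eventually_not_mem_edgeImage (by linarith [ht.1]) hf (fun u hu => (hγ u hu).1)
        ?_).mono fun _ h _ => h
      simpa only [Function.comp_apply, hγz] using havoid e' he'
    filter_upwards [eventually_all.2 hall] with u hu
    simpa [otherEdges] using hu
  have hfollow := R.eqOn_param_of_dStar_eq ht (hf.mono (Icc_subset_Icc_left hc))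
    (fun u hu => (hγ u (Icc_subset_Icc_left hc hu)).1) hend
  intro s hs
  have hs' : c + s ∈ Icc c (c + t) := ⟨le_add_of_nonneg_right hs.1, by linarith [hs.2]⟩
  refine ⟨γ (c + s), by simpa [c] using hfollow hs', ?_⟩
  rw [dist_comm, (hγ _ (Icc_subset_Icc_left hc hs')).2]
  ring

lemma exists_descent_of_mem_Ioo (hX : IsGeodesicSpace X) {e : R.graph.E} {t : ℝ}
    (ht : t ∈ Ioo 0 (R.graph.len e)) {z : X} (hz : R.π z = R.graph.param e t) :
    ∀ s ∈ Icc 0 t, ∃ z', R.π z' = R.graph.param e s ∧ dist z z' = t - s :=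
  R.exists_descent hX (Ioo_subset_Ioc_self ht) hz fun _ he' => Or.inl fun hmem =>
    R.graph.param_not_mem_otherEdges ht (hz ▸ mem_biUnion he' hmem)

lemma exists_descent_of_not_isMergingVertex (hX : IsGeodesicSpace X) {e : R.graph.E}
    (he : ¬R.IsMergingVertex (R.graph.tgt e)) {z : X} (hz : R.π z = R.graph.tgt e) :
    ∀ s ∈ Icc 0 (R.graph.len e),
      ∃ z', R.π z' = R.graph.param e s ∧ dist z z' = R.graph.len e - s :=
  R.exists_descent hX ⟨R.graph.len_pos e, le_rfl⟩ hz fun e' he' =>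
    R.graph.not_mem_edgeImage_or_eq_src (hz ▸ ⟨e, Or.inr rfl⟩)
      fun h => he ⟨e', e, he', hz ▸ h, rfl⟩

lemma exists_tgt_eq (hX : IsGeodesicSpace X) {v : G} (hv : v ∈ R.graph.vertexSet)
    (hpos : 0 < R.dStar v) : ∃ e, R.graph.tgt e = v := by
  by_contra! hno
  obtain ⟨z, rfl⟩ := R.surj v
  obtain ⟨γ, hγz, hf, hγ⟩ := R.exists_dStar_ray hX z
  have hall : ∀ᶠ u in 𝓝[<] dist r z, ∀ e, R.π (γ u) ∉ R.graph.edgeImage e :=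
    eventually_all.2 fun e => R.eventually_not_mem_edgeImage (R.dStar_π z ▸ hpos) hf
      (fun u hu => (hγ u hu).1)
      (by simpa only [Function.comp_apply, hγz] using
        R.graph.not_mem_edgeImage_or_eq_src hv (hno e))
  obtain ⟨u, hu⟩ := hall.exists
  obtain ⟨e, t, ht, he⟩ := R.graph.cover (R.π (γ u))
  exact hu e ⟨t, ht, he⟩

/-- When other edges also end at `tgt e`, descending from it along `e` may be impossible;
instead, take a limit of descents started inside `e`, using the compactness of `X`. -/
lemma exists_near_tgt [CompactSpace X] (hX : IsGeodesicSpace X) {e : R.graph.E} {s : ℝ}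
    (hs : s ∈ Ico 0 (R.graph.len e)) {ε : ℝ} (hε : 0 < ε) :
    ∃ w₀ w, R.π w₀ = R.graph.tgt e ∧ R.π w = R.graph.param e s ∧
      dist w₀ w ≤ R.graph.len e - s + ε := by
  obtain ⟨t, -, ht, hlim⟩ := exists_seq_strictMono_tendsto' hs.2
  have hlift : ∀ n, ∃ w w', R.π w = R.graph.param e (t n) ∧ R.π w' = R.graph.param e s ∧
      dist w w' = t n - s := fun n => by
    obtain ⟨w, hw⟩ := R.surj (R.graph.param e (t n))
    obtain ⟨w', hw', hd⟩ := R.exists_descent_of_mem_Ioo hX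
      ⟨hs.1.trans_lt (ht n).1, (ht n).2⟩ hw s ⟨hs.1, (ht n).1.le⟩
    exact ⟨w, w', hw, hw', hd⟩
  choose w w' hw hw' hd using hlift
  obtain ⟨w₀, -, φ, hφ, hconv⟩ := isCompact_univ.tendsto_subseq fun n => mem_univ (w n)
  have hw₀ : R.π w₀ = R.graph.tgt e := by
    have htφ : Tendsto (t ∘ φ) atTop (𝓝[Icc 0 (R.graph.len e)] (R.graph.len e)) :=
      tendsto_nhdsWithin_iff.2 ⟨hlim.comp hφ.tendsto_atTop,
        Eventually.of_forall fun n => ⟨hs.1.trans (ht _).1.le, (ht _).2.le⟩⟩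
    have hparam := ((R.graph.param_lipschitz e).continuousOn (R.graph.len e)
      ⟨(R.graph.len_pos e).le, le_rfl⟩).tendsto.comp htφ
    refine tendsto_nhds_unique ((R.continuous_π.tendsto w₀).comp hconv) ?_
    simpa [Function.comp_def, hw, tgt] using hparam
  obtain ⟨N, hN⟩ := Metric.tendsto_atTop.1 hconv ε hε
  refine ⟨w₀, w' (φ N), hw₀, hw' _, ?_⟩
  calc dist w₀ (w' (φ N)) ≤ dist w₀ (w (φ N)) + dist (w (φ N)) (w' (φ N)) :=
        dist_triangle _ _ _
    _ ≤ R.graph.len e - s + ε := by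
      have h₁ : dist (w (φ N)) w₀ < ε := hN N le_rfl
      have h₂ : t (φ N) < R.graph.len e := (ht (φ N)).2
      rw [dist_comm, hd]
      linarith

open Classical in
/-- The price of descending through `v`: a jump inside the fiber of `v` plus the slack `ε` of
`exists_near_tgt`, paid only at merging vertices. -/
noncomputable def charge (ε : ℝ) (v : G) : ℝ :=
  if R.IsMergingVertex v then R.fiberDiamSup + ε else 0

lemma charge_nonneg {ε : ℝ} (hε : 0 ≤ ε) (v : G) : 0 ≤ R.charge ε v := by
  unfold charge
  split_ifs
  exacts [add_nonneg R.fiberDiamSup_nonneg hε, le_rfl]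

lemma exists_lift_of_finish_lt_start [CompactSpace X] (hX : IsGeodesicSpace X) {ε : ℝ}
    (hε : 0 < ε) {σ : R.graph.Segment} (hσ : σ.finish < σ.start) {x : X}
    (hx : R.π x = σ.src) :
    ∃ x', R.π x' = σ.tgt ∧ dist x x' ≤ σ.cost + R.charge ε σ.src := by
  have hcost : σ.cost = σ.start - σ.finish := abs_of_pos (sub_pos.2 hσ)
  have hcharge := R.charge_nonneg hε.le σ.src
  rcases σ.start_mem.2.lt_or_eq with hlt | hlen
  · obtain ⟨x', hx', hd⟩ :=
      R.exists_descent_of_mem_Ioo hX ⟨σ.finish_mem.1.trans_lt hσ, hlt⟩ hx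
      σ.finish ⟨σ.finish_mem.1, hσ.le⟩
    exact ⟨x', hx', by linarith⟩
  have hsrc : σ.src = R.graph.tgt σ.edge := by rw [Segment.src, hlen]; rfl
  by_cases hm : R.IsMergingVertex σ.src
  · obtain ⟨w₀, w, hw₀, hw, hd⟩ :=
      R.exists_near_tgt hX ⟨σ.finish_mem.1, hσ.trans_eq hlen⟩ hε
    have hjump := R.dist_le_fiberDiamSup (hx.trans (hsrc.trans hw₀.symm))
    refine ⟨w, hw, ?_⟩
    rw [charge, if_pos hm]
    linarith [dist_triangle x w₀ w]
  · rw [hsrc] at hx hm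
    obtain ⟨x', hx', hd⟩ :=
      R.exists_descent_of_not_isMergingVertex hX hm hx σ.finish σ.finish_mem
    exact ⟨x', hx', by linarith⟩

lemma exists_lift_of_forall_finish_lt_start [CompactSpace X] (hX : IsGeodesicSpace X) {ε : ℝ}
    (hε : 0 < ε) {p q : G} {L : List R.graph.Segment} (hL : R.graph.IsChain p L q)
    (hdesc : ∀ σ ∈ L, σ.finish < σ.start) {x : X} (hx : R.π x = p) :
    ∃ x', R.π x' = q ∧
      dist x x' ≤ R.graph.cost L + (L.map fun σ => R.charge ε σ.src).sum := by
  induction L generalizing p x with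
  | nil => exact ⟨x, hx.trans hL, by simp⟩
  | cons σ L ih =>
    obtain ⟨x₁, hx₁, hd₁⟩ := R.exists_lift_of_finish_lt_start hX hε
      (hdesc σ List.mem_cons_self) (hx.trans hL.1.symm)
    obtain ⟨x', hx', hd⟩ := ih hL.2 (fun τ hτ => hdesc τ (List.mem_cons_of_mem _ hτ)) hx₁
    refine ⟨x', hx', ?_⟩
    simp only [cost_cons, List.map_cons, List.sum_cons]
    linarith [dist_triangle x x₁ x']

lemma exists_lift_of_forall_start_lt_finish [CompactSpace X] (hX : IsGeodesicSpace X) {ε : ℝ}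
    (hε : 0 < ε) {p q : G} {L : List R.graph.Segment} (hL : R.graph.IsChain p L q)
    (hasc : ∀ σ ∈ L, σ.start < σ.finish) {y : X} (hy : R.π y = q) :
    ∃ z, R.π z = p ∧
      dist y z ≤ R.graph.cost L + (L.map fun σ => R.charge ε σ.tgt).sum := by
  obtain ⟨z, hz, hd⟩ := R.exists_lift_of_forall_finish_lt_start hX hε hL.reverse
    (by simpa [Segment.reverse] using hasc) hy
  exact ⟨z, hz, by simpa [Function.comp_def] using hd⟩

lemma exists_lift_to_tgt [CompactSpace X] (hX : IsGeodesicSpace X) {ε : ℝ} (hε : 0 < ε)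
    {p : G} {A : List R.graph.Segment} {σ : R.graph.Segment}
    (hA : R.graph.IsChain p (A ++ [σ]) σ.tgt) (hasc : ∀ τ ∈ A ++ [σ], τ.start < τ.finish)
    (hσ : σ.finish = R.graph.len σ.edge) {x : X} (hx : R.π x = p) :
    ∃ w, R.π w = σ.tgt ∧ dist x w ≤ R.fiberDiamSup + R.graph.cost (A ++ [σ]) +
      (A.map fun τ => R.charge ε τ.tgt).sum + ε := by
  have hσasc : σ.start < σ.finish := hasc σ (by simp)
  obtain ⟨w, w', hw, hw', hd⟩ :=
    R.exists_near_tgt hX ⟨σ.start_mem.1, hσasc.trans_eq hσ⟩ hε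
  obtain ⟨m, hAm, hσm, -⟩ := isChain_append.1 hA
  obtain ⟨z, hz, hzd⟩ := R.exists_lift_of_forall_start_lt_finish hX hε hAm
    (fun τ hτ => hasc τ (by simp [hτ])) (hw'.trans hσm)
  have hjump := R.dist_le_fiberDiamSup (hx.trans hz.symm)
  refine ⟨w, by rw [hw, tgt, ← hσ]; rfl, ?_⟩
  have hcost : σ.cost = σ.finish - σ.start := by
    rw [Segment.cost, abs_sub_comm]; exact abs_of_pos (sub_pos.2 hσasc)
  simp only [cost_append, cost_cons, cost_nil]
  linarith [dist_triangle4 x z w' w, dist_comm w w', dist_comm z w']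

lemma isMergingVertex_of_turn {σ τ : R.graph.Segment} (hσ : σ.start < σ.finish)
    (hτ : τ.finish < τ.start) (hστ : σ.tgt = τ.src)
    (hcont : ¬(σ.edge = τ.edge ∧ σ.finish = τ.start)) :
    σ.finish = R.graph.len σ.edge ∧ R.IsMergingVertex σ.tgt := by
  have hσlen : σ.finish = R.graph.len σ.edge := by
    by_contra hne
    obtain ⟨he, hst⟩ := R.graph.eq_of_param_eq_of_mem_Ioo
      ⟨σ.start_mem.1.trans_lt hσ, lt_of_le_of_ne σ.finish_mem.2 hne⟩ τ.start_mem hστ.symm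
    exact hcont ⟨he.symm, hst.symm⟩
  have hv : σ.tgt ∈ R.graph.vertexSet := ⟨σ.edge, Or.inr (by rw [Segment.tgt, hσlen]; rfl)⟩
  have hτlen : τ.start = R.graph.len τ.edge := by
    by_contra hne
    exact R.graph.ne_param_of_mem_vertexSet hv
      ⟨τ.finish_mem.1.trans_lt hτ, lt_of_le_of_ne τ.start_mem.2 hne⟩ hστ
  refine ⟨hσlen, σ.edge, τ.edge,
    fun he => hcont ⟨he, by rw [hσlen, hτlen, he]⟩, ?_, ?_⟩
  · rw [Segment.tgt, hσlen]; rfl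
  · rw [hστ, Segment.src, hτlen]; rfl

lemma card_le_betti1 (hX : IsGeodesicSpace X) (S : Finset G)
    (hS : ∀ v ∈ S, R.IsMergingVertex v) : S.card ≤ R.graph.betti1 := by
  classical
  have hcount := Finset.card_add_card_image_le R.graph.tgt S hS
  have hsub : R.graph.vertexSet ⊆ ↑(insert (R.π r) (Finset.univ.image R.graph.tgt)) := by
    intro v hv
    rcases (R.dStar_nonneg v).eq_or_lt with h | h
    · exact Finset.mem_insert.2 (Or.inl (R.eq_π_of_dStar_eq_zero h.symm))
    · obtain ⟨e, he⟩ := R.exists_tgt_eq hX hv h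
      exact Finset.mem_insert_of_mem (Finset.mem_image.2 ⟨e, Finset.mem_univ _, he⟩)
  have hV : Nat.card R.graph.vertexSet ≤ (Finset.univ.image R.graph.tgt).card + 1 := by
    refine (Nat.card_mono (Finset.finite_toSet _) hsub).trans ?_
    rw [Nat.card_coe_set_eq, Set.ncard_coe_finset]
    exact Finset.card_insert_le _ _
  rw [betti1, Nat.card_eq_fintype_card]
  omega

lemma sum_charge_le (hX : IsGeodesicSpace X) {ε : ℝ} (hε : 0 ≤ ε) {l : List G}
    (hl : l.Nodup) :
    (l.map (R.charge ε)).sum ≤ R.graph.betti1 * (R.fiberDiamSup + ε) := by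
  classical
  rw [← List.sum_toFinset _ hl]
  have hfilter : ∑ v ∈ l.toFinset, R.charge ε v =
      ∑ v ∈ l.toFinset with R.IsMergingVertex v, (R.fiberDiamSup + ε) := by
    rw [Finset.sum_filter]
    rfl
  rw [hfilter, Finset.sum_const, nsmul_eq_mul]
  exact mul_le_mul_of_nonneg_right
    (by exact_mod_cast R.card_le_betti1 hX _ fun v hv => (Finset.mem_filter.1 hv).2)
    (add_nonneg R.fiberDiamSup_nonneg hε)

lemma exists_eq_ascending_append {p q : G} {σ : R.graph.Segment} {L : List R.graph.Segment}
    (hL : R.graph.IsReduced p (σ :: L) q) (hup : σ.start < σ.finish) :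
    ∃ A σ₁ B, σ :: L = A ++ σ₁ :: B ∧ (∀ τ ∈ A ++ [σ₁], τ.start < τ.finish) ∧
      (B = [] ∨ σ₁.finish = R.graph.len σ₁.edge ∧ R.IsMergingVertex σ₁.tgt) := by
  obtain ⟨A, B, hAB, hasc, hB⟩ := List.exists_eq_append_forall_and_not_head
    (fun τ : R.graph.Segment => τ.start < τ.finish) (σ :: L)
  obtain ⟨A, σ₁, rfl⟩ : ∃ A' σ₁, A = A' ++ [σ₁] :=
    (List.eq_nil_or_concat' A).resolve_left fun hA => hB σ L (by simpa [hA] using hAB.symm) hup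
  refine ⟨A, σ₁, B, by simpa using hAB, hasc, ?_⟩
  rcases B with _ | ⟨τ, B⟩
  · exact Or.inl rfl
  have hL' : R.graph.IsReduced p (A ++ σ₁ :: τ :: B) q := by simpa [hAB] using hL
  obtain ⟨m, hAm, -⟩ := isChain_append.1 hL'.1
  have hturn := hL'.right hAm
  have hτ : τ.finish < τ.start :=
    (hturn.tail.start_ne_finish.lt_or_gt).resolve_left (hB τ B rfl)
  exact Or.inr (R.isMergingVertex_of_turn (hasc σ₁ (by simp)) hτ hturn.1.2.1.symm
    hturn.not_continues)

/-- Descending segments are lifted forwards from `x`. A maximal run of ascending segments is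
lifted backwards from its top: from `y` if the run ends the chain, and otherwise from a point
given by `exists_near_tgt` at the merging vertex where the chain turns down; one jump inside a
fiber then joins the run to its bottom. -/
lemma dist_le_of_isReduced [CompactSpace X] (hX : IsGeodesicSpace X) {ε : ℝ} (hε : 0 < ε)
    {p q : G} {L : List R.graph.Segment} (hL : R.graph.IsReduced p L q) {x y : X}
    (hx : R.π x = p) (hy : R.π y = q) :
    dist x y ≤ R.graph.cost L + R.fiberDiamSup + R.charge ε p +
      2 * (L.map fun σ => R.charge ε σ.tgt).sum := by
  have hcharge := R.charge_nonneg hε.le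
  have hsum_nonneg : ∀ A : List R.graph.Segment, 0 ≤ (A.map fun σ => R.charge ε σ.tgt).sum :=
    fun A => List.sum_nonneg (by simpa using fun (σ : R.graph.Segment) _ => hcharge σ.tgt)
  match L, hL with
  | [], hL =>
    have := R.dist_le_fiberDiamSup (hx.trans (hL.1.trans hy.symm))
    simp only [cost_nil, List.map_nil, List.sum_nil]
    linarith [hcharge p]
  | σ :: L, hL =>
    rcases hL.start_ne_finish.lt_or_gt with hup | hdown
    · obtain ⟨A, σ₁, B, hAB, hasc, hB⟩ := R.exists_eq_ascending_append hL hup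
      obtain ⟨v, hAv, hBq⟩ := isChain_append.1 (by simpa [hAB] using hL.1 :
        R.graph.IsChain p ((A ++ [σ₁]) ++ B) q)
      obtain rfl : σ₁.tgt = v := (isChain_append.1 hAv).elim fun _ h => h.2.2
      rw [hAB]
      simp only [List.map_append, List.sum_append, cost_append, List.map_cons, List.sum_cons,
        cost_cons]
      rcases hB with rfl | ⟨hσ₁, hmerge⟩
      · obtain ⟨z, hz, hd⟩ :=
          R.exists_lift_of_forall_start_lt_finish hX hε hAv hasc (hy.trans hBq.symm)
        have := R.dist_le_fiberDiamSup (hx.trans hz.symm)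
        simp only [List.map_append, List.sum_append, cost_append, List.map_cons, List.sum_cons,
          List.map_nil, List.sum_nil, cost_cons, cost_nil] at hd ⊢
        linarith [dist_triangle x z y, dist_comm y z, hcharge p, hcharge σ₁.tgt, hsum_nonneg A]
      · obtain ⟨w, hw, hd⟩ := R.exists_lift_to_tgt hX hε hAv hasc hσ₁ hx
        have ih := dist_le_of_isReduced hX hε
          (IsReduced.right (by simpa [hAB] using hL) hAv) hw hy
        have hv : R.charge ε σ₁.tgt = R.fiberDiamSup + ε := if_pos hmerge
        simp only [cost_append, cost_cons, cost_nil] at hd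
        linarith [dist_triangle x w y, hcharge p, hsum_nonneg A]
    · obtain ⟨x₁, hx₁, hd⟩ :=
        R.exists_lift_of_finish_lt_start hX hε hdown (hx.trans hL.1.1.symm)
      have ih := dist_le_of_isReduced hX hε hL.tail hx₁ hy
      rw [hL.1.1] at hd
      simp only [cost_cons, List.map_cons, List.sum_cons]
      linarith [dist_triangle x x₁ y, hcharge σ.tgt]
termination_by L.length
decreasing_by
  all_goals simp_wf
  have := congrArg List.length hAB
  simp only [List.length_append, List.length_cons] at this
  omega

lemma dist_le_cost_add [CompactSpace X] (hX : IsGeodesicSpace X) {ε : ℝ} (hε : 0 < ε)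
    {x y : X} {L : List R.graph.Segment} (hL : R.graph.IsReduced (R.π x) L (R.π y)) :
    dist x y ≤ R.graph.cost L + R.fiberDiamSup + 2 * R.graph.betti1 * (R.fiberDiamSup + ε) := by
  have hlift := R.dist_le_of_isReduced hX hε hL rfl rfl
  have hsum := R.sum_charge_le hX hε.le hL.nodup
  simp only [List.map_cons, List.sum_cons, List.map_map, Function.comp_def] at hsum
  linarith [R.charge_nonneg hε.le (R.π x)]

end ReebGraphOf

theorem dist_le_reeb_dist_add_general {X : Type*} [MetricSpace X] [CompactSpace X]
    (hX : IsGeodesicSpace X) (r : X)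
    {G : Type*} [MetricSpace G] (R : ReebGraphOf X r G) :
    ∀ x y : X,
      dist x y ≤ dist (R.π x) (R.π y) + 2 * ((R.graph.betti1 : ℝ) + 1) * R.fiberDiamSup := by
  intro x y
  set β : ℝ := (R.graph.betti1 : ℝ)
  have hM := R.fiberDiamSup_nonneg
  have hβ : 0 ≤ β := Nat.cast_nonneg _
  have hε_bound : ∀ ε > 0,
      dist x y ≤ dist (R.π x) (R.π y) + (2 * β + 1) * R.fiberDiamSup + (2 * β + 1) * ε := by
    intro ε hε
    obtain ⟨L₀, hL₀, hcost₀⟩ := R.graph.exists_isChain_cost_lt (R.π x) (R.π y) hε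
    obtain ⟨L, hL, hcost⟩ := MetricGraphStruct.exists_isReduced hL₀
    linarith [R.dist_le_cost_add hX hε hL]
  have hlim : dist x y ≤ dist (R.π x) (R.π y) + (2 * β + 1) * R.fiberDiamSup :=
    le_of_forall_pos_le_add fun η hη => by
      simpa [mul_div_cancel₀ η (by positivity : 2 * β + 1 ≠ 0)] using
        hε_bound (η / (2 * β + 1)) (by positivity)
  linarith

/-- For the metric Reeb graph `G` of `d = d_X(r,·)` on a compact connected geodesic
space `X`: `d_X(x,y) ≤ d_G(π x, π y) + 2 (β₁(G) + 1) M`, where `β₁(G)` is the first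
Betti number of `G` and `M` the supremum of the diameters of the fibers of `π`. -/
theorem dist_le_reeb_dist_add {X : Type*} [MetricSpace X] [CompactSpace X]
    [ConnectedSpace X] (hX : IsGeodesicSpace X) (r : X)
    {G : Type*} [MetricSpace G] (R : ReebGraphOf X r G) :
    ∀ x y : X,
      dist x y ≤ dist (R.π x) (R.π y) + 2 * ((R.graph.betti1 : ℝ) + 1) * R.fiberDiamSup :=
  dist_le_reeb_dist_add_general hX r R
end
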